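/- arXiv:2601.01929 — 7 statements merged into one kernel-verified Lean document; each statement's English description precedes it below -/
import Mathlib

section
/- If A, B ⊆ binomial([n], k) and binomial([n], ℓ) respectively are nonempty cross intersecting families (every A ∈ 𝒜, B ∈ ℬ satisfy A ∩ B ≠ ∅) with n ≥ k + ℓ and k ≥ ℓ, then |𝒜| + |ℬ| ≤ C(n,k) − C(n−ℓ,k) + 1. -/
open Finset

/-- Lexicographic order on finite sets: `A ≼ B` iff `A ⊇ B` or `min (A \ B) < min (B \ A)`. -/
def lexLE (A B : Finset ℕ) : Prop := B ⊆ A ∨ (A \ B).min < (B \ A).min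

instance : DecidableRel lexLE := fun A B => by unfold lexLE; infer_instance

/-- The family of all `k`-element subsets of `[n] = {1,…,n}`. -/
def ksubsets (n k : ℕ) : Finset (Finset ℕ) := (Finset.Icc 1 n).powersetCard k

/-- Two families are cross intersecting. -/
def crossInt (A B : Finset (Finset ℕ)) : Prop := ∀ X ∈ A, ∀ Y ∈ B, (X ∩ Y).Nonempty

/-- `ℒ([n], R, k)`: all `k`-subsets of `[n]` lexicographically no more than `R`. -/
def Lfam (n : ℕ) (R : Finset ℕ) (k : ℕ) : Finset (Finset ℕ) :=
  (ksubsets n k).filter (fun F => lexLE F R)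

/-- `ℒ([n], r, k)`: the first `r` sets of `binomial([n],k)` in lexicographic order. -/
def Lnum (n r k : ℕ) : Finset (Finset ℕ) :=
  (ksubsets n k).filter (fun F => ((ksubsets n k).filter (fun G => lexLE G F)).card ≤ r)

/-- `F` and `H` are partners: they strongly intersect at their last element. -/
def isPartner (F H : Finset ℕ) : Prop := ∃ q, F ∩ H = {q} ∧ F ∪ H = Finset.Icc 1 q

/-- `K` is the `k`-partner of `F` (inside `[n]`). -/
def isKPartner (n : ℕ) (F : Finset ℕ) (k : ℕ) (K : Finset ℕ) : Prop :=
  ∃ H, isPartner F H ∧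
    ((k = H.card ∧ K = H) ∨
     (H.card < k ∧ K = H ∪ Finset.Icc (n - k + H.card + 1) n) ∨
     (k < H.card ∧ K ∈ ksubsets n k ∧ lexLE K H ∧
        ∀ K' ∈ ksubsets n k, lexLE K' H → lexLE K' K))

/-- `ℓ(F)`: the length of the maximal tail interval `[n-ℓ+1, n] ⊆ F`. -/
def tailLen (n : ℕ) (F : Finset ℕ) : ℕ :=
  ((Finset.range (n + 1)).filter (fun x => Finset.Icc (n - x + 1) n ⊆ F)).sup id

/-- `F^t = [n - ℓ(F) + 1, n]`. -/
def tailSet (n : ℕ) (F : Finset ℕ) : Finset ℕ := Finset.Icc (n - tailLen n F + 1) n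

/-- `𝒜` (a family of `f`-subsets of `[n]`) is maximal with respect to `ℬ`. -/
def maximalTo (n f : ℕ) (A B : Finset (Finset ℕ)) : Prop :=
  ∀ A' ⊆ ksubsets n f, A ⊆ A' → crossInt A' B → A' = A

/-- The pair of sets `(A, B)` is maximal. -/
def pairMaximal (n : ℕ) (A B : Finset ℕ) : Prop :=
  crossInt (Lfam n A A.card) (Lfam n B B.card) ∧
  maximalTo n A.card (Lfam n A A.card) (Lfam n B B.card) ∧
  maximalTo n B.card (Lfam n B B.card) (Lfam n A A.card)

/-- `A` is the `|A|`-parity of `B`: same set after removing tails, and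
`ℓ(B) - ℓ(A) = |B| - |A|` (stated additively). -/
def isParity (n : ℕ) (A B : Finset ℕ) : Prop :=
  A \ tailSet n A = B \ tailSet n B ∧ tailLen n A + B.card = tailLen n B + A.card


open Finset Nat Finset.Colex

namespace FT

/-- choose is monotone below the middle. -/
lemma choose_mono_half {i a b : ℕ} (hab : a ≤ b) (h : 2 * b ≤ i) : i.choose a ≤ i.choose b := by
  induction b with
  | zero =>
    have : a = 0 := by omega
    simp [this]
  | succ b ih =>
    rcases Nat.eq_or_lt_of_le hab with rfl | hab'
    · exact le_rfl
    · have hab2 : a ≤ b := by omega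
      refine (ih hab2 (by omega)).trans ?_
      exact Nat.choose_le_succ_of_lt_half_left (by omega)

/-- choose is monotone up to the middle. -/
lemma choose_mono_mid {i a b : ℕ} (hab : a ≤ b) (h : a + b ≤ i) : i.choose a ≤ i.choose b := by
  rcases le_or_gt (2*b) i with hb | hb
  · exact choose_mono_half hab hb
  · have hbi : b ≤ i := by omega
    rw [← Nat.choose_symm hbi]
    exact choose_mono_half (by omega) (by omega)

lemma choose_antitone_far {i a b : ℕ} (hab : a ≤ b) (hi : i ≤ a + b) : i.choose b ≤ i.choose a := by
  rcases Nat.lt_or_ge i b with h | h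
  · simp [Nat.choose_eq_zero_of_lt h]
  · have h1 : i.choose b = i.choose (i - b) := (Nat.choose_symm h).symm
    rw [h1]
    exact choose_mono_mid (by omega) (by omega)

/-- Hockey-stick splitting. -/
lemma hockey {k s n : ℕ} (hks : k ≤ s) (hsn : s ≤ n) :
    s.choose (k+1) + (∑ i ∈ Ico s n, i.choose k) = n.choose (k+1) := by
  induction n with
  | zero => · interval_cases s; simp
  | succ n ih =>
    rcases Nat.eq_or_lt_of_le hsn with rfl | hs'
    · simp
    · have hsn' : s ≤ n := by omega
      rw [Finset.sum_Ico_succ_top hsn', ← Nat.add_assoc, ih hsn', Nat.choose_succ_succ']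
      omega

lemma F1 {m s k : ℕ} (hk : 1 ≤ k) (hks : k ≤ s) (hsm : s ≤ m) (hmk : m + 1 ≤ s + k) :
    s.choose k + m.choose s ≤ m.choose k + 1 := by
  have h1 : s.choose k + (∑ i ∈ Ico s m, i.choose (k-1)) = m.choose k := by
    have := hockey (k := k-1) (s := s) (n := m) (by omega) hsm
    rwa [show k-1+1 = k by omega] at this
  have h2 : 1 + (∑ i ∈ Ico s m, i.choose (s-1)) = m.choose s := by
    have := hockey (k := s-1) (s := s) (n := m) (by omega) hsm
    rwa [show s-1+1 = s by omega, Nat.choose_self] at this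
  have h3 : (∑ i ∈ Ico s m, i.choose (s-1)) ≤ (∑ i ∈ Ico s m, i.choose (k-1)) := by
    apply Finset.sum_le_sum
    intro i hi
    rw [Finset.mem_Ico] at hi
    exact choose_antitone_far (by omega) (by omega)
  omega

lemma F2 {m s k : ℕ} (hk : 1 ≤ k) (hks : k ≤ s) (hsm : s ≤ m) (hmk : m + 1 ≤ s + k) :
    (s-1).choose k + m.choose s ≤ m.choose k := by
  have h1 : (s-1).choose k + (∑ i ∈ Ico (s-1) m, i.choose (k-1)) = m.choose k := by
    have := hockey (k := k-1) (s := s-1) (n := m) (by omega) (by omega)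
    rwa [show k-1+1 = k by omega] at this
  have h2 : (s-1).choose s + (∑ i ∈ Ico (s-1) m, i.choose (s-1)) = m.choose s := by
    have := hockey (k := s-1) (s := s-1) (n := m) (by omega) (by omega)
    rwa [show s-1+1 = s by omega] at this
  rw [Nat.choose_eq_zero_of_lt (by omega), Nat.zero_add] at h2
  have h3 : (∑ i ∈ Ico (s-1) m, i.choose (s-1)) ≤ (∑ i ∈ Ico (s-1) m, i.choose (k-1)) := by
    apply Finset.sum_le_sum
    intro i hi
    rw [Finset.mem_Ico] at hi
    exact choose_antitone_far (by omega) (by omega)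
  omega

lemma G1 {n s k : ℕ} (h : k + s + 1 = n) (hks : k ≤ s) :
    (s+1).choose (k+1) + n.choose (s+1) ≤ s.choose k + n.choose (k+1) := by
  have h1 : s.choose (k+1) + (∑ i ∈ Ico s n, i.choose k) = n.choose (k+1) :=
    hockey hks (by omega)
  have h2 : s.choose (s+1) + (∑ i ∈ Ico s n, i.choose s) = n.choose (s+1) :=
    hockey le_rfl (by omega)
  rw [Nat.choose_eq_zero_of_lt (by omega), Nat.zero_add] at h2
  have h3 : (∑ i ∈ Ico s n, i.choose s) ≤ (∑ i ∈ Ico s n, i.choose k) := by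
    apply Finset.sum_le_sum
    intro i hi
    rw [Finset.mem_Ico] at hi
    exact choose_antitone_far hks (by omega)
  have h4 : (s+1).choose (k+1) = s.choose k + s.choose (k+1) := Nat.choose_succ_succ _ _
  omega

lemma G1b {n s k : ℕ} (h : k + s + 1 = n) (hk : 1 ≤ k) (hks : k ≤ s) :
    (s+1).choose (k+1) + n.choose (s+1) + (n-1).choose s ≤ (n-1).choose k + n.choose (k+1) + 1 := by
  have hm : n - 1 = s + k := by omega
  have e1 : n.choose (k+1) = (n-1).choose k + (n-1).choose (k+1) := by
    rw [show n = (n-1)+1 by omega]; rw [Nat.choose_succ_succ]; simp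
  have e2 : n.choose (s+1) = (n-1).choose s + (n-1).choose (s+1) := by
    rw [show n = (n-1)+1 by omega]; rw [Nat.choose_succ_succ]; simp
  have e3 : (n-1).choose s = (n-1).choose k := by
    rw [hm, ← Nat.choose_symm (show s ≤ s + k by omega), show s+k-s = k by omega]
  have f1 : (s+1).choose (k+1) + (n-1).choose (s+1) ≤ (n-1).choose (k+1) + 1 :=
    F1 (by omega) (by omega) (by omega) (by omega)
  omega





/-- Erase the minimum element (identity on the empty set). -/
def emin {α : Type*} [LinearOrder α] (S : Finset α) : Finset α :=
  if h : S.Nonempty then S.erase (S.min' h) else S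

lemma emin_subset {α : Type*} [LinearOrder α] (S : Finset α) : emin S ⊆ S := by
  unfold emin; split
  · exact erase_subset _ _
  · exact Subset.rfl

lemma card_emin {α : Type*} [LinearOrder α] (S : Finset α) (h : S.Nonempty) :
    (emin S).card = S.card - 1 := by
  unfold emin; rw [dif_pos h, card_erase_of_mem (min'_mem _ _)]

lemma emin_iter_subset {α : Type*} [LinearOrder α] (j : ℕ) (S : Finset α) : emin^[j] S ⊆ S := by
  induction j generalizing S with
  | zero => exact Subset.rfl
  | succ j ih =>
    rw [Function.iterate_succ_apply]
    exact (ih (emin S)).trans (emin_subset S)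

lemma card_emin_iter {α : Type*} [LinearOrder α] (j : ℕ) (S : Finset α) (hj : j ≤ S.card) :
    (emin^[j] S).card = S.card - j := by
  induction j generalizing S with
  | zero => simp
  | succ j ih =>
    rw [Function.iterate_succ_apply]
    have hS : S.Nonempty := card_pos.mp (by omega)
    rw [ih (emin S) (by rw [card_emin S hS]; omega), card_emin S hS]
    omega

/-- Number of `t`-subsets of `range n` colexicographically at most `R`. -/
def nrank (n t : ℕ) (R : Finset ℕ) : ℕ :=
  (((range n).powersetCard t).filter (fun T => toColex T ≤ toColex R)).card

lemma nrank_le (n t : ℕ) (R : Finset ℕ) : nrank n t R ≤ n.choose t := by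
  unfold nrank
  exact (card_filter_le _ _).trans (by rw [card_powersetCard, card_range])

lemma one_le_nrank {n t : ℕ} {R : Finset ℕ} (hR : R ⊆ range n) (hc : R.card = t) :
    1 ≤ nrank n t R := by
  unfold nrank
  refine card_pos.mpr ⟨R, mem_filter.mpr ⟨mem_powersetCard.mpr ⟨hR, hc⟩, le_rfl⟩⟩

/-- Peeling the top element `m`. -/
lemma nrank_peel {m t : ℕ} (ht : 1 ≤ t) {R : Finset ℕ} (hR : R ⊆ range (m+1)) (hm : m ∈ R) :
    nrank (m+1) t R = m.choose t + nrank m (t-1) (R.erase m) := by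
  classical
  unfold nrank
  rw [← card_filter_add_card_filter_not (p := fun T => m ∈ T) (s := _)]
  rw [filter_filter, filter_filter]
  have h2 : (((range (m+1)).powersetCard t).filter
      (fun T => toColex T ≤ toColex R ∧ m ∉ T)).card = m.choose t := by
    have hset : ((range (m+1)).powersetCard t).filter (fun T => toColex T ≤ toColex R ∧ m ∉ T)
        = (range m).powersetCard t := by
      ext T
      simp only [mem_filter, mem_powersetCard]
      constructor
      · rintro ⟨⟨hsub, hcard⟩, _, hmT⟩
        refine ⟨fun x hx => ?_, hcard⟩
        have := mem_range.mp (hsub hx)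
        have : x ≠ m := fun h => hmT (h ▸ hx)
        rw [mem_range]; omega
      · rintro ⟨hsub, hcard⟩
        have hmT : m ∉ T := fun h => by have := mem_range.mp (hsub h); omega
        refine ⟨⟨hsub.trans (range_subset_range.mpr (by omega)), hcard⟩, ?_, hmT⟩
        rw [toColex_le_toColex]
        intro a haT haR
        exact ⟨m, hm, hmT, by have := mem_range.mp (hsub haT); omega⟩
    rw [hset, card_powersetCard, card_range]
  have h1 : (((range (m+1)).powersetCard t).filter
      (fun T => toColex T ≤ toColex R ∧ m ∈ T)).card = nrank m (t-1) (R.erase m) := by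
    unfold nrank
    apply card_nbij' (i := fun T => T.erase m) (j := fun T => insert m T)
    · intro T hT
      simp only [mem_coe, mem_filter, mem_powersetCard] at hT
      obtain ⟨⟨hsub, hcard⟩, hle, hmT⟩ := hT
      refine mem_filter.mpr ⟨mem_powersetCard.mpr ⟨?_, ?_⟩, ?_⟩
      · intro x hx
        rw [mem_erase] at hx
        have := mem_range.mp (hsub hx.2)
        rw [mem_range]; omega
      · rw [card_erase_of_mem hmT, hcard]
      · beta_reduce; rw [← sdiff_singleton_eq_erase, ← sdiff_singleton_eq_erase]
        exact (toColex_sdiff_le_toColex_sdiff (by simpa using hmT) (by simpa using hm)).mpr hle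
    · intro T hT
      simp only [mem_coe, mem_filter, mem_powersetCard] at hT
      obtain ⟨⟨hsub, hcard⟩, hle⟩ := hT
      have hmT : m ∉ T := fun h => by have := mem_range.mp (hsub h); omega
      refine mem_filter.mpr ⟨mem_powersetCard.mpr ⟨?_, ?_⟩, ?_, mem_insert_self _ _⟩
      · intro x hx
        rcases mem_insert.mp hx with rfl | hx
        · rw [mem_range]; omega
        · have := mem_range.mp (hsub hx)
          rw [mem_range]; omega
      · rw [card_insert_of_notMem hmT, hcard]; omega
      · have : toColex ((insert m T) \ {m}) ≤ toColex (R \ {m}) := by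
          rw [sdiff_singleton_eq_erase, sdiff_singleton_eq_erase, erase_insert hmT]
          exact hle
        exact (toColex_sdiff_le_toColex_sdiff (by simp) (by simpa using hm)).mp this
    · intro T hT
      simp only [mem_coe, mem_filter] at hT
      exact insert_erase hT.2.2
    · intro T hT
      simp only [mem_coe, mem_filter, mem_powersetCard] at hT
      have hmT : m ∉ T := fun h => by have := mem_range.mp (hT.1.1 h); omega
      exact erase_insert hmT
  unfold nrank at h1
  omega

/-- Dropping an unused top element. -/
lemma nrank_drop {m t : ℕ} {R : Finset ℕ} (hR : R ⊆ range m) :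
    nrank (m+1) t R = nrank m t R := by
  unfold nrank
  congr 1
  ext T
  simp only [mem_filter, mem_powersetCard]
  constructor
  · rintro ⟨⟨hsub, hcard⟩, hle⟩
    refine ⟨⟨fun x hx => ?_, hcard⟩, hle⟩
    by_contra hxm
    have hx1 := mem_range.mp (hsub hx)
    have hxm' : x = m := by simp only [mem_range] at hxm; omega
    subst hxm'
    have hxR : x ∉ R := fun h => by have := mem_range.mp (hR h); omega
    obtain ⟨b, hbR, _, hxb⟩ := hle hx hxR
    have := mem_range.mp (hR hbR)
    omega
  · rintro ⟨⟨hsub, hcard⟩, hle⟩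
    exact ⟨⟨hsub.trans (range_subset_range.mpr (by omega)), hcard⟩, hle⟩

lemma emin_insert_top {S : Finset ℕ} {M : ℕ} (hS : S.Nonempty) (h : ∀ x ∈ S, x < M) :
    emin (insert M S) = insert M (emin S) := by
  have hMS : M ∉ S := fun hm => lt_irrefl _ (h M hm)
  have h1 : (insert M S).Nonempty := insert_nonempty _ _
  have hmin : (insert M S).min' h1 = S.min' hS := by
    rw [min'_insert M S hS]
    exact min_eq_right (le_of_lt (h _ (min'_mem _ _)))
  unfold emin
  rw [dif_pos h1, dif_pos hS, hmin]
  apply erase_insert_of_ne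
  exact fun hc => absurd (hc ▸ min'_mem S hS) hMS

lemma emin_iter_insert_top {M : ℕ} : ∀ {j : ℕ} {S : Finset ℕ}, j ≤ S.card → (∀ x ∈ S, x < M) →
    emin^[j] (insert M S) = insert M (emin^[j] S) := by
  intro j
  induction j with
  | zero => intro S _ _; simp
  | succ j ih =>
    intro S hj h
    have hS : S.Nonempty := card_pos.mp (by omega)
    rw [Function.iterate_succ_apply, Function.iterate_succ_apply,
        emin_insert_top hS h]
    exact ih (by rw [card_emin S hS]; omega) (fun x hx => h x (emin_subset S hx))

lemma emin_iter_eq_empty {S : Finset ℕ} : emin^[S.card] S = ∅ := by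
  have := card_emin_iter S.card S le_rfl
  rw [Nat.sub_self] at this
  exact card_eq_zero.mp this

lemma emin_Ico {a M : ℕ} (h : a < M) : emin (Ico a M) = Ico (a+1) M := by
  have hne : (Ico a M).Nonempty := by rw [nonempty_Ico]; omega
  have hmin : (Ico a M).min' hne = a := by
    apply le_antisymm
    · exact min'_le _ _ (by rw [mem_Ico]; omega)
    · apply le_min'
      intro y hy
      rw [mem_Ico] at hy; omega
  unfold emin
  rw [dif_pos hne, hmin, Finset.Ico_add_one_left_eq_Ioo]
  exact Ico_erase_left a M

lemma emin_iter_range {M : ℕ} : ∀ {j : ℕ}, j ≤ M → emin^[j] (range M) = Ico j M := by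
  intro j
  induction j with
  | zero => intro _; rw [range_eq_Ico]; rfl
  | succ j ih =>
    intro hj
    rw [Function.iterate_succ_apply', ih (by omega), emin_Ico (by omega)]

lemma toColex_le_Ico_top {M k : ℕ} {T : Finset ℕ} (hT : T ⊆ range M) (hc : T.card = k) :
    toColex T ≤ toColex (Ico (M-k) M) := by
  have hkM : k ≤ M := by
    have := Finset.card_le_card hT
    rw [card_range] at this; omega
  rw [toColex_le_toColex]
  intro a haT hax
  have haM : a < M := mem_range.mp (hT haT)
  have haMk : a < M - k := by
    rw [mem_Ico] at hax; omega
  have hne : ¬ (Ico (M-k) M ⊆ T) := by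
    intro hsub
    have hcard : (Ico (M-k) M).card = k := by rw [Nat.card_Ico]; omega
    have heq : Ico (M-k) M = T := Finset.eq_of_subset_of_card_le hsub (by omega)
    rw [← heq] at haT
    rw [mem_Ico] at haT; omega
  obtain ⟨b, hb1, hb2⟩ := not_subset.mp hne
  refine ⟨b, hb1, hb2, ?_⟩
  rw [mem_Ico] at hb1; omega

lemma nrank_Ico_top {n M k : ℕ} (hMn : M ≤ n) (hkM : k ≤ M) :
    M.choose k ≤ nrank n k (Ico (M-k) M) := by
  unfold nrank
  have h1 : (range M).powersetCard k ⊆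
      ((range n).powersetCard k).filter (fun T => toColex T ≤ toColex (Ico (M-k) M)) := by
    intro T hT
    rw [mem_powersetCard] at hT
    refine mem_filter.mpr ⟨mem_powersetCard.mpr ⟨hT.1.trans (range_subset_range.mpr hMn), hT.2⟩,
      toColex_le_Ico_top hT.1 hT.2⟩
  calc M.choose k = ((range M).powersetCard k).card := by rw [card_powersetCard, card_range]
  _ ≤ _ := card_le_card h1

lemma eq_range_of_subset {m : ℕ} {R : Finset ℕ} (hR : R ⊆ range (m+1)) (hm : m ∉ R)
    (hc : R.card = m) : R = range m := by
  have hsub : R ⊆ range m := by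
    intro x hx
    have := mem_range.mp (hR hx)
    have : x ≠ m := fun h => hm (h ▸ hx)
    rw [mem_range]; omega
  exact (Finset.eq_of_subset_of_card_le hsub (by rw [card_range, hc])).symm.symm

lemma nrank_full_top {m : ℕ} : nrank (m+1) m (range m) = 1 := by
  unfold nrank
  have hset : ((range (m+1)).powersetCard m).filter (fun T => toColex T ≤ toColex (range m))
      = {range m} := by
    ext T
    simp only [mem_filter, mem_powersetCard, mem_singleton]
    constructor
    · rintro ⟨⟨hsub, hcard⟩, hle⟩
      by_cases hmT : m ∈ T
      · exfalso
        have hmR : m ∉ range m := by simp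
        obtain ⟨b, hbR, _, hmb⟩ := hle hmT hmR
        have := mem_range.mp hbR; omega
      · exact eq_range_of_subset hsub hmT hcard
    · rintro rfl
      exact ⟨⟨range_subset_range.mpr (by omega), card_range m⟩, le_rfl⟩
  rw [hset, card_singleton]



end FT

namespace FT

open Finset Nat Finset.Colex

lemma pascal' {a b : ℕ} (h : 1 ≤ b) : (a+1).choose b = a.choose (b-1) + a.choose b := by
  obtain ⟨b', rfl⟩ : ∃ b', b = b'+1 := ⟨b-1, by omega⟩
  rw [Nat.choose_succ_succ]
  simp

lemma H2 {M σ κ : ℕ} (hκ : 1 ≤ κ) (hκσ : κ ≤ σ+1) (hσM : σ ≤ M) (hMκσ : M ≤ κ+σ) :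
    σ.choose κ + M.choose (σ+1) ≤ M.choose κ := by
  have h1 : σ.choose κ + (∑ i ∈ Ico σ M, i.choose (κ-1)) = M.choose κ := by
    have := hockey (k := κ-1) (s := σ) (n := M) (by omega) hσM
    rwa [show κ-1+1 = κ by omega] at this
  have h2 : σ.choose (σ+1) + (∑ i ∈ Ico σ M, i.choose σ) = M.choose (σ+1) :=
    hockey le_rfl hσM
  rw [Nat.choose_eq_zero_of_lt (by omega), Nat.zero_add] at h2
  have h3 : (∑ i ∈ Ico σ M, i.choose σ) ≤ (∑ i ∈ Ico σ M, i.choose (κ-1)) := by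
    apply Finset.sum_le_sum
    intro i hi
    rw [Finset.mem_Ico] at hi
    exact choose_antitone_far (by omega) (by omega)
  omega

def CRst (n : ℕ) : Prop := ∀ s k (R : Finset ℕ), s + 1 ≤ n → n ≤ s + k → k ≤ s →
  R ⊆ range n → R.card = s →
  (n.choose k ≤ nrank n k (emin^[s-k] R) ∨
   s.choose k + nrank n s R ≤ nrank n k (emin^[s-k] R) + 1)

def CUst (n : ℕ) : Prop := ∀ s k d (R : Finset ℕ), 1 ≤ d → s + k + d = n → k ≤ s →
  R ⊆ range n → R.card = s →
  (n.choose k ≤ nrank n k (emin^[s-k] R) ∨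
   (s+d).choose (k+d) + n.choose (s+d) + nrank n s R
     ≤ nrank n k (emin^[s-k] R) + n.choose (k+d) + 1)

theorem crux_both : ∀ n : ℕ, CRst n ∧ CUst n := by
  intro n
  induction n with
  | zero =>
    constructor
    · intro s k R hs1; omega
    · intro s k d R hd heq; omega
  | succ m ih =>
    obtain ⟨ihCR, ihCU⟩ := ih
    have peel : ∀ (s k : ℕ) (R : Finset ℕ), 1 ≤ k → k < s → R ⊆ range (m+1) → R.card = s →
        m ∈ R →
        nrank (m+1) k (emin^[s-k] R) = m.choose k + nrank m (k-1) (emin^[s-k] (R.erase m)) ∧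
        nrank (m+1) s R = m.choose s + nrank m (s-1) (R.erase m) ∧
        (R.erase m) ⊆ range m ∧ (R.erase m).card = s - 1 := by
      intro s k R hk1 hks hR hcard hmR
      set R' := R.erase m with hR'
      have hR'sub : R' ⊆ range m := by
        intro x hx
        rw [hR', mem_erase] at hx
        have := mem_range.mp (hR hx.2)
        rw [mem_range]; omega
      have hR'card : R'.card = s - 1 := by
        rw [hR', card_erase_of_mem hmR, hcard]
      have hRins : R = insert m R' := (insert_erase hmR).symm
      have hlt : ∀ x ∈ R', x < m := fun x hx => mem_range.mp (hR'sub hx)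
      have hins : emin^[s-k] R = insert m (emin^[s-k] R') := by
        rw [hRins]
        exact emin_iter_insert_top (by omega) hlt
      have hYsub : emin^[s-k] R' ⊆ range m := (emin_iter_subset _ _).trans hR'sub
      have hmY : m ∉ emin^[s-k] R' := fun h => by have := mem_range.mp (hYsub h); omega
      constructor
      · rw [hins, nrank_peel hk1 (by
          intro x hx
          rcases mem_insert.mp hx with rfl | hx
          · rw [mem_range]; omega
          · exact (range_subset_range.mpr (by omega)) (hYsub hx)) (mem_insert_self _ _),
          erase_insert hmY]
      refine ⟨nrank_peel (by omega) hR hmR, hR'sub, hR'card⟩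
    have subrange : ∀ (R : Finset ℕ), R ⊆ range (m+1) → m ∉ R → R ⊆ range m := by
      intro R hR hmR x hx
      have := mem_range.mp (hR hx)
      have : x ≠ m := fun hc => hmR (hc ▸ hx)
      rw [mem_range]; omega
    constructor
    · -- CRst (m+1)
      intro s k R hs1 hs2 hks hR hcard
      by_cases hkseq : k = s
      · subst hkseq
        right
        rw [Nat.sub_self, Function.iterate_zero_apply, Nat.choose_self]
        omega
      have hks' : k < s := lt_of_le_of_ne hks hkseq
      have hk1 : 1 ≤ k := by omega
      by_cases hmR : m ∈ R
      · obtain ⟨e1, e2, hR'sub, hR'card⟩ := peel s k R hk1 hks' hR hcard hmR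
        have hjj : (s-1) - (k-1) = s - k := by omega
        have hp : (m+1).choose k = m.choose (k-1) + m.choose k := pascal' hk1
        by_cases hbig : m + 2 ≤ s + k
        · rcases ihCR (s-1) (k-1) (R.erase m) (by omega) (by omega) (by omega) hR'sub hR'card
            with h | h
          · left; rw [hjj] at h; omega
          · right
            rw [hjj] at h
            have hq : s.choose k = (s-1).choose (k-1) + (s-1).choose k := by
              rw [show s = (s-1)+1 by omega]
              rw [pascal' hk1]
              congr 1 <;> congr 1 <;> omega
            have hf2 : (s-1).choose k + m.choose s ≤ m.choose k :=
              F2 hk1 hks (by omega) (by omega)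
            omega
        · -- k + s = m + 1 : use CU at deficit 1
          rcases ihCU (s-1) (k-1) 1 (R.erase m) le_rfl (by omega) (by omega) hR'sub hR'card
            with h | h
          · left; rw [hjj] at h; omega
          · right
            rw [hjj, show s-1+1 = s by omega, show k-1+1 = k by omega] at h
            omega
      · have hRm : R ⊆ range m := subrange R hR hmR
        by_cases hsm : s = m
        · right
          subst hsm
          have hReq : R = range s := eq_range_of_subset hR hmR hcard
          subst hReq
          have l1 : nrank (s+1) s (range s) = 1 := nrank_full_top
          have l2 : emin^[s-k] (range s) = Ico (s-k) s := emin_iter_range (by omega)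
          have l3 : s.choose k ≤ nrank (s+1) k (Ico (s-k) s) :=
            nrank_Ico_top (by omega) (by omega)
          rw [l1, l2]
          omega
        · have d1 : nrank (m+1) s R = nrank m s R := nrank_drop hRm
          have d2 : nrank (m+1) k (emin^[s-k] R) = nrank m k (emin^[s-k] R) :=
            nrank_drop ((emin_iter_subset _ _).trans hRm)
          rcases ihCR s k R (by omega) (by omega) hks hRm hcard with h | h
          · right
            have hf1 : s.choose k + m.choose s ≤ m.choose k + 1 :=
              F1 hk1 hks (by omega) (by omega)
            have hle : nrank m s R ≤ m.choose s := nrank_le m s R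
            omega
          · right; omega
    · -- CUst (m+1)
      intro s k d R hd heq hks hR hcard
      by_cases hk0 : k = 0
      · left
        subst hk0
        have he : emin^[s-0] R = (∅ : Finset ℕ) := by
          rw [Nat.sub_zero, ← hcard]
          exact emin_iter_eq_empty
        rw [he, Nat.choose_zero_right]
        exact one_le_nrank (by intro x hx; simp at hx) (by simp)
      have hk1 : 1 ≤ k := by omega
      by_cases hkseq : k = s
      · right
        subst hkseq
        rw [Nat.sub_self, Function.iterate_zero_apply, Nat.choose_self]
        omega
      have hks' : k < s := lt_of_le_of_ne hks hkseq
      by_cases hmR : m ∈ R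
      · obtain ⟨e1, e2, hR'sub, hR'card⟩ := peel s k R hk1 hks' hR hcard hmR
        have hjj : (s-1) - (k-1) = s - k := by omega
        have hp : (m+1).choose k = m.choose (k-1) + m.choose k := pascal' hk1
        rcases ihCU (s-1) (k-1) (d+1) (R.erase m) (by omega) (by omega) (by omega)
            hR'sub hR'card with h | h
        · left; rw [hjj] at h; omega
        · right
          rw [hjj, show s-1+(d+1) = s+d by omega, show k-1+(d+1) = k+d by omega] at h
          -- Pascal expansions and symmetries
          have p1 : (m+1).choose (k+d) = m.choose (k+d-1) + m.choose (k+d) :=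
            pascal' (by omega)
          have p2 : (m+1).choose (s+d) = m.choose (s+d-1) + m.choose (s+d) :=
            pascal' (by omega)
          have sym1 : m.choose (s+d-1) = m.choose k := by
            rw [← Nat.choose_symm (n := m) (k := s+d-1) (by omega)]
            congr 1; omega
          have sym2 : m.choose s = m.choose (k+d-1) := by
            rw [← Nat.choose_symm (n := m) (k := s) (by omega)]
            congr 1; omega
          omega
      · have hRm : R ⊆ range m := subrange R hR hmR
        have d1 : nrank (m+1) s R = nrank m s R := nrank_drop hRm
        have d2 : nrank (m+1) k (emin^[s-k] R) = nrank m k (emin^[s-k] R) :=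
          nrank_drop ((emin_iter_subset _ _).trans hRm)
        have p1 : (m+1).choose (k+d) = m.choose (k+d-1) + m.choose (k+d) :=
          pascal' (by omega)
        have p2 : (m+1).choose (s+d) = m.choose (s+d-1) + m.choose (s+d) :=
          pascal' (by omega)
        have sym1 : m.choose (s+d-1) = m.choose k := by
          rw [← Nat.choose_symm (n := m) (k := s+d-1) (by omega)]
          congr 1; omega
        have sym2 : m.choose s = m.choose (k+d-1) := by
          rw [← Nat.choose_symm (n := m) (k := s) (by omega)]
          congr 1; omega
        have hfull : ∀ hx : m.choose k ≤ nrank m k (emin^[s-k] R),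
            (s+d).choose (k+d) + (m+1).choose (s+d) + nrank (m+1) s R
              ≤ nrank (m+1) k (emin^[s-k] R) + (m+1).choose (k+d) + 1 := by
          intro hx
          have hF1 : (s+d).choose (k+d) + m.choose (s+d) ≤ m.choose (k+d) + 1 :=
            F1 (by omega) (by omega) (by omega) (by omega)
          have hle : nrank m s R ≤ m.choose s := nrank_le m s R
          omega
        by_cases hd1 : d = 1
        · subst hd1
          rcases ihCR s k R (by omega) (by omega) (by omega) hRm hcard with h | h
          · right; exact hfull h
          · right
            have hg1 : (s+1).choose (k+1) + (m+1).choose (s+1)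
                ≤ s.choose k + (m+1).choose (k+1) := G1 (by omega) (by omega)
            omega
        · rcases ihCU s k (d-1) R (by omega) (by omega) (by omega) hRm hcard with h | h
          · right; exact hfull h
          · right
            -- need: C(s+d,k+d) + C(m+1,s+d) + [stuff] via H2
            have q1 : (s+d).choose (k+d) = (s+d-1).choose (k+d-1) + (s+d-1).choose (k+d) := by
              rw [show s+d = (s+d-1)+1 by omega]
              rw [pascal' (by omega)]
              simp
            have hH2 : (s+d-1).choose (k+d) + m.choose (s+d-1+1) ≤ m.choose (k+d) :=
              H2 (by omega) (by omega) (by omega) (by omega)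
            rw [show s+d-1+1 = s+d by omega] at hH2
            rw [show s+(d-1) = s+d-1 by omega, show k+(d-1) = k+d-1 by omega] at h
            omega

end FT
attribute [-instance] instDecidableEqFin

namespace FT

open Finset Nat Finset.Colex
open scoped FinsetFamily

lemma emin_of_nonempty {α : Type*} [LinearOrder α] {S : Finset α} (h : S.Nonempty) :
    emin S = S.erase (S.min' h) := dif_pos h

lemma emin_image {n : ℕ} (R : Finset (Fin n)) :
    (emin R).image Fin.val = emin (R.image Fin.val) := by
  by_cases h : R.Nonempty
  · have h' : (R.image Fin.val).Nonempty := h.image _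
    have hmin : ((R.image Fin.val).min' h') = (R.min' h : Fin n).val := by
      apply le_antisymm
      · exact min'_le _ _ (mem_image_of_mem _ (min'_mem _ _))
      · apply le_min'
        intro y hy
        obtain ⟨i, hi, rfl⟩ := mem_image.mp hy
        exact min'_le R i hi
    unfold emin
    rw [dif_pos h, dif_pos h', hmin, image_erase Fin.val_injective]
  · rw [not_nonempty_iff_eq_empty] at h
    subst h
    simp [emin]

lemma emin_iter_image {n : ℕ} (j : ℕ) (R : Finset (Fin n)) :
    (emin^[j] R).image Fin.val = emin^[j] (R.image Fin.val) := by
  induction j generalizing R with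
  | zero => simp
  | succ j ih =>
    rw [Function.iterate_succ_apply, Function.iterate_succ_apply, ih, emin_image]

lemma card_initSeg_eq_nrank {n : ℕ} (R : Finset (Fin n)) :
    (initSeg R).card = nrank n R.card (R.image Fin.val) := by
  unfold nrank
  apply card_nbij' (i := fun t => t.image Fin.val)
      (j := fun T => univ.filter (fun i : Fin n => (i : ℕ) ∈ T))
  · intro t ht
    rw [mem_coe, mem_initSeg] at ht
    refine mem_filter.mpr ⟨mem_powersetCard.mpr ⟨?_, ?_⟩, ?_⟩
    · intro x hx
      obtain ⟨i, _, rfl⟩ := mem_image.mp hx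
      exact mem_range.mpr i.isLt
    · rw [card_image_of_injective _ Fin.val_injective, ← ht.1]
    · exact (toColex_image_le_toColex_image Fin.val_strictMono).mpr ht.2
  · intro T hT
    rw [mem_coe, mem_filter, mem_powersetCard] at hT
    obtain ⟨⟨hTsub, hTcard⟩, hTle⟩ := hT
    have himg : (univ.filter (fun i : Fin n => (i : ℕ) ∈ T)).image Fin.val = T := by
      ext x
      simp only [mem_image, mem_filter, mem_univ, true_and]
      constructor
      · rintro ⟨i, hi, rfl⟩; exact hi
      · intro hx
        exact ⟨⟨x, mem_range.mp (hTsub hx)⟩, hx, rfl⟩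
    rw [mem_coe, mem_initSeg]
    constructor
    · have := congrArg Finset.card himg
      rw [card_image_of_injective _ Fin.val_injective] at this
      beta_reduce; omega
    · apply (toColex_image_le_toColex_image (f := Fin.val) Fin.val_strictMono).mp
      rw [himg]
      exact hTle
  · intro t _
    ext i
    simp only [mem_filter, mem_univ, true_and, mem_image]
    constructor
    · rintro ⟨i', hi', h⟩
      rwa [← Fin.val_injective h]
    · intro h; exact ⟨i, h, rfl⟩
  · intro T hT
    rw [mem_coe, mem_filter, mem_powersetCard] at hT
    ext x
    simp only [mem_image, mem_filter, mem_univ, true_and]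
    constructor
    · rintro ⟨i, hi, rfl⟩; exact hi
    · intro hx
      exact ⟨⟨x, mem_range.mp (hT.1.1 hx)⟩, hx, rfl⟩

lemma shadow_iter_initSeg {n : ℕ} (j : ℕ) (R : Finset (Fin n)) (hj : j ≤ R.card) :
    ∂^[j] (initSeg R) = initSeg (emin^[j] R) := by
  induction j with
  | zero => simp
  | succ j ih =>
    have hne : (emin^[j] R).Nonempty := by
      rw [← card_pos, card_emin_iter j R (by omega)]
      omega
    have he := emin_of_nonempty hne
    rw [Function.iterate_succ_apply', ih (by omega), Function.iterate_succ_apply',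
        shadow_initSeg hne, he]

lemma exists_initSeg_card {n s m : ℕ} (hs : s ≤ n) (hm1 : 1 ≤ m) (hm2 : m ≤ n.choose s) :
    ∃ R : Finset (Fin n), R.card = s ∧ (initSeg R).card = m := by
  classical
  have hcardP : (powersetCard s (univ : Finset (Fin n))).card = n.choose s := by
    rw [card_powersetCard, Finset.card_univ, Fintype.card_fin]
  have hsub : ∀ R : Finset (Fin n), initSeg R ⊆ powersetCard R.card univ := by
    intro R t ht
    rw [mem_initSeg] at ht
    exact mem_powersetCard.mpr ⟨subset_univ _, ht.1.symm⟩
  have hmono : ∀ R₁ R₂ : Finset (Fin n), R₁.card = s → R₂.card = s →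
      toColex R₁ < toColex R₂ → (initSeg R₁).card < (initSeg R₂).card := by
    intro R₁ R₂ h1 h2 hlt
    apply card_lt_card
    rw [ssubset_iff_of_subset]
    · exact ⟨R₂, mem_initSeg_self, fun hc => absurd (mem_initSeg.mp hc).2 (not_le.mpr hlt)⟩
    · intro t ht
      rw [mem_initSeg] at ht ⊢
      exact ⟨by omega, ht.2.trans hlt.le⟩
  have key := surj_on_of_inj_on_of_card_le
      (s := powersetCard s (univ : Finset (Fin n))) (t := Icc 1 (n.choose s))
      (f := fun R _ => (initSeg R).card)
      (fun R hR => by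
        rw [mem_Icc]
        constructor
        · exact card_pos.mpr initSeg_nonempty
        · calc (initSeg R).card ≤ (powersetCard R.card univ).card := card_le_card (hsub R)
            _ = n.choose R.card := by rw [card_powersetCard, Finset.card_univ, Fintype.card_fin]
            _ = n.choose s := by rw [(mem_powersetCard.mp hR).2])
      (fun R₁ R₂ hR₁ hR₂ heq => by
        have h1 := (mem_powersetCard.mp hR₁).2
        have h2 := (mem_powersetCard.mp hR₂).2
        by_contra hne
        have hne' : toColex R₁ ≠ toColex R₂ := fun h => hne (toColex_inj.mp h)
        rcases hne'.lt_or_gt with h | h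
        · exact absurd heq (Nat.ne_of_lt (hmono _ _ h1 h2 h))
        · exact absurd heq.symm (Nat.ne_of_lt (hmono _ _ h2 h1 h)))
      (by rw [Nat.card_Icc, hcardP]; omega)
  obtain ⟨R, hR, hm⟩ := key m (by rw [mem_Icc]; omega)
  exact ⟨R, (mem_powersetCard.mp hR).2, hm.symm⟩

lemma main_fin {n k l : ℕ} (hl : 1 ≤ l) (hkl : l ≤ k) (hn : k + l ≤ n)
    (𝒜 ℬ : Finset (Finset (Fin n)))
    (h𝒜 : 𝒜 ⊆ powersetCard k univ) (hℬ : ℬ ⊆ powersetCard l univ)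
    (h𝒜ne : 𝒜.Nonempty) (hℬne : ℬ.Nonempty)
    (hcross : ∀ X ∈ 𝒜, ∀ Y ∈ ℬ, (X ∩ Y).Nonempty) :
    𝒜.card + ℬ.card + (n-l).choose k ≤ n.choose k + 1 := by
  classical
  set s := n - l with hs
  have hsk : k ≤ s := by omega
  have hsn : s + 1 ≤ n := by omega
  have hnsk : n ≤ s + k := by omega
  set ℬc := ℬ.image (fun B => Bᶜ) with hℬc
  have hℬcs : ∀ B ∈ ℬc, B.card = s := by
    intro B hB
    obtain ⟨B₀, hB₀, rfl⟩ := mem_image.mp hB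
    rw [card_compl, Fintype.card_fin, (mem_powersetCard.mp (hℬ hB₀)).2]
  have hℬcsized : (ℬc : Set (Finset (Fin n))).Sized s := fun B hB => hℬcs B hB
  have hℬccard : ℬc.card = ℬ.card := by
    apply Finset.card_image_of_injOn
    intro a _ b _ hab
    have := congrArg (fun X => Xᶜ) hab
    simpa using this
  set m := ℬ.card with hm
  have hm1 : 1 ≤ m := card_pos.mpr hℬne
  have hm2 : m ≤ n.choose s := by
    have : ℬc ⊆ powersetCard s univ := fun B hB =>
      mem_powersetCard.mpr ⟨subset_univ _, hℬcs B hB⟩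
    calc m = ℬc.card := hℬccard.symm
      _ ≤ (powersetCard s (univ : Finset (Fin n))).card := card_le_card this
      _ = n.choose s := by rw [card_powersetCard, Finset.card_univ, Fintype.card_fin]
  obtain ⟨R, hRcard, hRseg⟩ := exists_initSeg_card (s := s) (by omega) hm1 hm2
  set 𝒮 := ∂^[s-k] ℬc with h𝒮
  have hkk : (∂^[s-k] (initSeg R)).card ≤ 𝒮.card := by
    apply iterated_kk hℬcsized (by rw [hRseg, hℬccard])
    rw [← hRcard]
    exact isInitSeg_initSeg
  have hQ : (∂^[s-k] (initSeg R)).card = nrank n k (emin^[s-k] (R.image Fin.val)) := by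
    rw [shadow_iter_initSeg (s-k) R (by omega), card_initSeg_eq_nrank,
        card_emin_iter (s-k) R (by omega), hRcard, emin_iter_image]
    congr 1
    omega
  have hRsub : R.image Fin.val ⊆ range n := by
    intro x hx
    obtain ⟨i, _, rfl⟩ := mem_image.mp hx
    exact mem_range.mpr i.isLt
  have hRcard' : (R.image Fin.val).card = s := by
    rw [card_image_of_injective _ Fin.val_injective, hRcard]
  have hrank_s : nrank n s (R.image Fin.val) = m := by
    have := card_initSeg_eq_nrank R
    rw [hRseg, hRcard] at this
    omega
  -- disjointness
  have hdisj : Disjoint 𝒜 𝒮 := by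
    rw [disjoint_left]
    intro K hK𝒜 hK𝒮
    obtain ⟨S, hSℬc, hKS, _⟩ := mem_shadow_iterate_iff_exists_mem_card_add.mp hK𝒮
    obtain ⟨B, hB, rfl⟩ := mem_image.mp hSℬc
    obtain ⟨x, hx⟩ := hcross K hK𝒜 B hB
    rw [mem_inter] at hx
    have := hKS hx.1
    rw [mem_compl] at this
    exact this hx.2
  have hcards : 𝒜.card + 𝒮.card ≤ n.choose k := by
    rw [← card_union_of_disjoint hdisj]
    have hsub : 𝒜 ∪ 𝒮 ⊆ powersetCard k univ := by
      intro K hK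
      rcases mem_union.mp hK with h | h
      · exact h𝒜 h
      · have := hℬcsized.shadow_iterate (k := s - k) h
        refine mem_powersetCard.mpr ⟨subset_univ _, ?_⟩
        rw [this]
        omega
    calc (𝒜 ∪ 𝒮).card ≤ (powersetCard k (univ : Finset (Fin n))).card := card_le_card hsub
      _ = n.choose k := by rw [card_powersetCard, Finset.card_univ, Fintype.card_fin]
  have h𝒜pos : 1 ≤ 𝒜.card := card_pos.mpr h𝒜ne
  rcases (crux_both n).1 s k (R.image Fin.val) hsn hnsk hsk hRsub hRcard' with h | h
  · exfalso
    omega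
  · rw [hrank_s] at h
    omega

end FT
namespace FT

open Finset Nat

lemma transfer_main (n k l : ℕ) (hl : 1 ≤ l) (hkl : l ≤ k) (hn : k + l ≤ n)
    (A B : Finset (Finset ℕ))
    (hA : A ⊆ (Finset.Icc 1 n).powersetCard k) (hB : B ⊆ (Finset.Icc 1 n).powersetCard l)
    (hAne : A.Nonempty) (hBne : B.Nonempty)
    (hcross : ∀ X ∈ A, ∀ Y ∈ B, (X ∩ Y).Nonempty) :
    A.card + B.card + (n-l).choose k ≤ n.choose k + 1 := by
  classical
  set ψ : Finset ℕ → Finset (Fin n) :=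
    fun X => univ.filter (fun i : Fin n => (i : ℕ) + 1 ∈ X) with hψ
  have hmemψ : ∀ (X : Finset ℕ) (i : Fin n), i ∈ ψ X ↔ (i : ℕ) + 1 ∈ X := by
    intro X i
    simp [hψ]
  have hcardψ : ∀ X : Finset ℕ, X ⊆ Finset.Icc 1 n → (ψ X).card = X.card := by
    intro X hX
    refine card_bij' (fun (i : Fin n) _ => (i : ℕ) + 1)
        (fun x hx => (⟨x - 1, by
          have := mem_Icc.mp (hX hx); omega⟩ : Fin n)) ?_ ?_ ?_ ?_
    · intro a ha
      exact (hmemψ X a).mp ha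
    · intro x hx
      apply (hmemψ X _).mpr
      have := mem_Icc.mp (hX hx)
      simpa [Nat.sub_add_cancel this.1] using hx
    · intro a _
      apply Fin.ext
      simp
    · intro x hx
      have := mem_Icc.mp (hX hx)
      simp [Nat.sub_add_cancel this.1]
  have hsubmem : ∀ X (hx : X ∈ ψ '' ∅ → True), True := fun _ _ => trivial
  have hmono : ∀ (X Y : Finset ℕ), X ⊆ Finset.Icc 1 n → ψ X = ψ Y → ∀ x ∈ X, x ∈ Y := by
    intro X Y hX h x hx
    have hx' := mem_Icc.mp (hX hx)
    have h1 : (⟨x - 1, by omega⟩ : Fin n) ∈ ψ X := by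
      apply (hmemψ X _).mpr
      simpa [Nat.sub_add_cancel hx'.1] using hx
    rw [h] at h1
    have := (hmemψ Y _).mp h1
    simpa [Nat.sub_add_cancel hx'.1] using this
  have hinj : ∀ (X Y : Finset ℕ), X ⊆ Finset.Icc 1 n → Y ⊆ Finset.Icc 1 n →
      ψ X = ψ Y → X = Y := by
    intro X Y hX hY h
    apply Finset.Subset.antisymm
    · intro x hx; exact hmono X Y hX h x hx
    · intro x hx; exact hmono Y X hY h.symm x hx
  have hsubA : ∀ X ∈ A, X ⊆ Finset.Icc 1 n := fun X hX => (mem_powersetCard.mp (hA hX)).1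
  have hsubB : ∀ X ∈ B, X ⊆ Finset.Icc 1 n := fun X hX => (mem_powersetCard.mp (hB hX)).1
  set A' := A.image ψ with hA'
  set B' := B.image ψ with hB'
  have hcardA : A'.card = A.card :=
    Finset.card_image_of_injOn (fun X hX Y hY h => hinj X Y (hsubA X hX) (hsubA Y hY) h)
  have hcardB : B'.card = B.card :=
    Finset.card_image_of_injOn (fun X hX Y hY h => hinj X Y (hsubB X hX) (hsubB Y hY) h)
  have hA'sub : A' ⊆ powersetCard k univ := by
    intro X' hX'
    obtain ⟨X, hX, rfl⟩ := mem_image.mp hX'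
    refine mem_powersetCard.mpr ⟨subset_univ _, ?_⟩
    rw [hcardψ X (hsubA X hX), (mem_powersetCard.mp (hA hX)).2]
  have hB'sub : B' ⊆ powersetCard l univ := by
    intro X' hX'
    obtain ⟨X, hX, rfl⟩ := mem_image.mp hX'
    refine mem_powersetCard.mpr ⟨subset_univ _, ?_⟩
    rw [hcardψ X (hsubB X hX), (mem_powersetCard.mp (hB hX)).2]
  have hcross' : ∀ X' ∈ A', ∀ Y' ∈ B', (X' ∩ Y').Nonempty := by
    intro X' hX' Y' hY'
    obtain ⟨X, hX, rfl⟩ := mem_image.mp hX'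
    obtain ⟨Y, hY, rfl⟩ := mem_image.mp hY'
    obtain ⟨q, hq⟩ := hcross X hX Y hY
    rw [mem_inter] at hq
    have hq1 := mem_Icc.mp (hsubA X hX hq.1)
    refine ⟨⟨q - 1, by omega⟩, mem_inter.mpr ⟨?_, ?_⟩⟩
    · exact (hmemψ X _).mpr (by simpa [Nat.sub_add_cancel hq1.1] using hq.1)
    · exact (hmemψ Y _).mpr (by simpa [Nat.sub_add_cancel hq1.1] using hq.2)
  have := main_fin hl hkl hn A' B' hA'sub hB'sub
    (hAne.image ψ) (hBne.image ψ) hcross'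
  omega

end FT


theorem stmt0 (n k l : ℕ) (hl : 1 ≤ l) (hkl : l ≤ k) (hn : k + l ≤ n)
    (A B : Finset (Finset ℕ))
    (hA : A ⊆ ksubsets n k) (hB : B ⊆ ksubsets n l)
    (hAne : A.Nonempty) (hBne : B.Nonempty)
    (hcross : crossInt A B) :
    A.card + B.card ≤ n.choose k - (n - l).choose k + 1 := by
  have h := FT.transfer_main n k l hl hkl hn A B hA hB hAne hBne hcross
  have h2 : (n-l).choose k ≤ n.choose k := Nat.choose_le_choose k (by omega)
  omega
end

section
/- Let k₁ ≥ k₂ ≥ ⋯ ≥ k_t ≥ 1 and k₁ + k₃ ≤ n < k₁ + k₂. Define ℋᵢ = { H ∈ binomial([n],kᵢ) : H ∩ [k_t] ≠ ∅ } for i ∈ {1,2}, and ℋᵢ = { H ∈ binomial([n],kᵢ) : [k_t] ⊆ H } for i ∈ [3,t]. Then (ℋ₁,…,ℋ_t) is a family of nonempty pairwise cross intersecting families and Σᵢ |ℋᵢ| = (C(n,k₁) − C(n−k_t,k₁)) + (C(n,k₂) − C(n−k_t,k₂)) + Σᵢ₌₃ᵗ C(n−k_t, kᵢ−k_t). -/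
open Finset

lemma Icc_sdiff_aux (n kt : ℕ) :
    Finset.Icc 1 n \ Finset.Icc 1 kt = Finset.Icc (kt+1) n := by
  ext x; simp [Finset.mem_sdiff]; omega

lemma card_ksubsets (n k : ℕ) : (ksubsets n k).card = n.choose k := by
  simp [ksubsets, Nat.card_Icc]

lemma count_meet (n kt m : ℕ) (hkt : kt ≤ n) :
    ((ksubsets n m).filter (fun X => (X ∩ Finset.Icc 1 kt).Nonempty)).card
      = n.choose m - (n - kt).choose m := by
  have hsplit := Finset.card_filter_add_card_filter_not
    (s := ksubsets n m) (p := fun X => (X ∩ Finset.Icc 1 kt).Nonempty)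
  have hdisj : (ksubsets n m).filter (fun X => ¬(X ∩ Finset.Icc 1 kt).Nonempty)
      = (Finset.Icc (kt+1) n).powersetCard m := by
    ext X
    simp only [Finset.mem_filter, ksubsets, Finset.mem_powersetCard,
      Finset.not_nonempty_iff_eq_empty, ← Finset.disjoint_iff_inter_eq_empty,
      ← Icc_sdiff_aux n kt, Finset.subset_sdiff]
    tauto
  have hcard2 : ((Finset.Icc (kt+1) n).powersetCard m).card = (n - kt).choose m := by
    rw [Finset.card_powersetCard, Nat.card_Icc]
    congr 1; omega
  rw [hdisj, hcard2, card_ksubsets] at hsplit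
  omega

lemma count_super (n kt m : ℕ) (hkt : kt ≤ n) (hm : kt ≤ m) :
    ((ksubsets n m).filter (fun X => Finset.Icc 1 kt ⊆ X)).card
      = (n - kt).choose (m - kt) := by
  have hcard2 : ((Finset.Icc (kt+1) n).powersetCard (m - kt)).card = (n - kt).choose (m - kt) := by
    rw [Finset.card_powersetCard, Nat.card_Icc]; congr 1; omega
  rw [← hcard2]
  apply Finset.card_bij' (fun X _ => X \ Finset.Icc 1 kt) (fun Y _ => Y ∪ Finset.Icc 1 kt)
  · intro X hX
    simp only [Finset.mem_filter, ksubsets, Finset.mem_powersetCard] at hX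
    obtain ⟨⟨hXs, hXc⟩, hTX⟩ := hX
    rw [Finset.mem_powersetCard]
    constructor
    · rw [← Icc_sdiff_aux n kt]; exact Finset.sdiff_subset_sdiff hXs le_rfl
    · rw [Finset.card_sdiff_of_subset hTX, hXc, Nat.card_Icc]; omega
  · intro Y hY
    rw [Finset.mem_powersetCard] at hY
    obtain ⟨hYs, hYc⟩ := hY
    have hd : Disjoint Y (Finset.Icc 1 kt) := by
      rw [← Icc_sdiff_aux n kt] at hYs
      exact (Finset.subset_sdiff.mp hYs).2
    simp only [Finset.mem_filter, ksubsets, Finset.mem_powersetCard]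
    refine ⟨⟨?_, ?_⟩, Finset.subset_union_right⟩
    · apply Finset.union_subset
      · rw [← Icc_sdiff_aux n kt] at hYs
        exact hYs.trans (Finset.sdiff_subset)
      · exact Finset.Icc_subset_Icc le_rfl hkt
    · rw [Finset.card_union_of_disjoint hd, hYc, Nat.card_Icc]; omega
  · intro X hX
    simp only [Finset.mem_filter] at hX
    exact Finset.sdiff_union_of_subset hX.2
  · intro Y hY
    rw [Finset.mem_powersetCard] at hY
    have hd : Disjoint Y (Finset.Icc 1 kt) := by
      rw [← Icc_sdiff_aux n kt] at hY
      exact (Finset.subset_sdiff.mp hY.1).2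
    exact Finset.union_sdiff_cancel_right hd

set_option maxHeartbeats 1000000 in
theorem stmt4 (n t : ℕ) (ht : 3 ≤ t) (k : Fin t → ℕ)
    (hpos : ∀ i, 1 ≤ k i)
    (hmono : ∀ i j : Fin t, i ≤ j → k j ≤ k i)
    (hn1 : k ⟨0, by omega⟩ + k ⟨2, by omega⟩ ≤ n)
    (hn2 : n < k ⟨0, by omega⟩ + k ⟨1, by omega⟩)
    (H : Fin t → Finset (Finset ℕ))
    (hH12 : ∀ i : Fin t, (i : ℕ) < 2 →
      H i = (ksubsets n (k i)).filter
        (fun X => (X ∩ Finset.Icc 1 (k ⟨t - 1, by omega⟩)).Nonempty))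
    (hHrest : ∀ i : Fin t, 2 ≤ (i : ℕ) →
      H i = (ksubsets n (k i)).filter
        (fun X => Finset.Icc 1 (k ⟨t - 1, by omega⟩) ⊆ X)) :
    (∀ i, (H i).Nonempty) ∧
    (∀ i j, i ≠ j → crossInt (H i) (H j)) ∧
    ∑ i, (H i).card =
      (n.choose (k ⟨0, by omega⟩) - (n - k ⟨t - 1, by omega⟩).choose (k ⟨0, by omega⟩)) +
      (n.choose (k ⟨1, by omega⟩) - (n - k ⟨t - 1, by omega⟩).choose (k ⟨1, by omega⟩)) +
      ∑ i ∈ Finset.univ.filter (fun i : Fin t => 2 ≤ (i : ℕ)),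
        (n - k ⟨t - 1, by omega⟩).choose (k i - k ⟨t - 1, by omega⟩) := by
  have ht1 : t - 1 < t := by omega
  set kt := k ⟨t - 1, ht1⟩ with hktdef
  have hkt_le : ∀ i : Fin t, kt ≤ k i := fun i =>
    hmono i ⟨t - 1, ht1⟩ (by simpa [Fin.le_def] using (by omega : (i : ℕ) ≤ t - 1))
  have hk0 : ∀ i : Fin t, k i ≤ k ⟨0, by omega⟩ := fun i =>
    hmono ⟨0, by omega⟩ i (by simp [Fin.le_def])
  have hki_le_n : ∀ i : Fin t, k i ≤ n := fun i => by
    have h1 := hk0 i; have := hpos ⟨2, by omega⟩; omega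
  have hkt_le_n : kt ≤ n := hki_le_n _
  have hkt_pos : 1 ≤ kt := hpos _
  have h0t : 0 < t := by omega
  have h1t : 1 < t := by omega
  -- membership characterization
  have hmem : ∀ (i : Fin t) (X : Finset ℕ), X ∈ H i →
      X ⊆ Finset.Icc 1 n ∧ X.card = k i ∧
      (((i : ℕ) < 2 → (X ∩ Finset.Icc 1 kt).Nonempty) ∧
       (2 ≤ (i : ℕ) → Finset.Icc 1 kt ⊆ X)) := by
    intro i X hX
    by_cases hi : (i : ℕ) < 2
    · rw [hH12 i hi] at hX
      simp only [Finset.mem_filter, ksubsets, Finset.mem_powersetCard] at hX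
      exact ⟨hX.1.1, hX.1.2, fun _ => hX.2, fun h => absurd h (by omega)⟩
    · rw [hHrest i (by omega)] at hX
      simp only [Finset.mem_filter, ksubsets, Finset.mem_powersetCard] at hX
      exact ⟨hX.1.1, hX.1.2, fun h => absurd h hi, fun _ => hX.2⟩
  refine ⟨?_, ?_, ?_⟩
  · -- nonempty
    intro i
    refine ⟨Finset.Icc 1 (k i), ?_⟩
    have hbase : Finset.Icc 1 (k i) ∈ ksubsets n (k i) := by
      rw [ksubsets, Finset.mem_powersetCard]
      exact ⟨Finset.Icc_subset_Icc le_rfl (hki_le_n i), by simp [Nat.card_Icc]⟩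
    by_cases hi : (i : ℕ) < 2
    · rw [hH12 i hi]
      refine Finset.mem_filter.mpr ⟨hbase, ⟨1, ?_⟩⟩
      simp only [Finset.mem_inter, Finset.mem_Icc]
      exact ⟨⟨le_rfl, hpos i⟩, le_rfl, hkt_pos⟩
    · rw [hHrest i (by omega)]
      exact Finset.mem_filter.mpr ⟨hbase, Finset.Icc_subset_Icc le_rfl (hkt_le i)⟩
  · -- cross intersecting
    intro i j hij X hX Y hY
    obtain ⟨hXs, hXc, hXm, hXsup⟩ := hmem i X hX
    obtain ⟨hYs, hYc, hYm, hYsup⟩ := hmem j Y hY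
    by_cases hi : (i : ℕ) < 2
    · by_cases hj : (j : ℕ) < 2
      · -- i, j ∈ {0,1}, distinct
        have hne : (i : ℕ) ≠ (j : ℕ) := fun h => hij (Fin.ext h)
        have hsum : n < k i + k j := by
          have hi01 : i = ⟨0, h0t⟩ ∨ i = ⟨1, h1t⟩ := by
            have : (i : ℕ) = 0 ∨ (i : ℕ) = 1 := by omega
            rcases this with h | h
            · exact Or.inl (Fin.ext h)
            · exact Or.inr (Fin.ext h)
          have hj01 : j = ⟨0, h0t⟩ ∨ j = ⟨1, h1t⟩ := by
            have : (j : ℕ) = 0 ∨ (j : ℕ) = 1 := by omega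
            rcases this with h | h
            · exact Or.inl (Fin.ext h)
            · exact Or.inr (Fin.ext h)
          rcases hi01 with rfl | rfl <;> rcases hj01 with rfl | rfl
          · simp at hne
          · exact hn2
          · rw [Nat.add_comm]; exact hn2
          · simp at hne
        by_contra hcon
        rw [Finset.not_nonempty_iff_eq_empty, ← Finset.disjoint_iff_inter_eq_empty] at hcon
        have hcard := Finset.card_le_card (Finset.union_subset hXs hYs)
        rw [Finset.card_union_of_disjoint hcon, hXc, hYc, Nat.card_Icc] at hcard
        omega
      · obtain ⟨a, ha⟩ := hXm hi
        rw [Finset.mem_inter] at ha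
        exact ⟨a, Finset.mem_inter.mpr ⟨ha.1, hYsup (by omega) ha.2⟩⟩
    · by_cases hj : (j : ℕ) < 2
      · obtain ⟨a, ha⟩ := hYm hj
        rw [Finset.mem_inter] at ha
        exact ⟨a, Finset.mem_inter.mpr ⟨hXsup (by omega) ha.2, ha.1⟩⟩
      · refine ⟨1, Finset.mem_inter.mpr ⟨hXsup (by omega) ?_, hYsup (by omega) ?_⟩⟩ <;>
          simp [Finset.mem_Icc, hkt_pos]
  · -- the sum
    have hcard : ∀ i : Fin t, (H i).card =
        if (i : ℕ) < 2 then n.choose (k i) - (n - kt).choose (k i)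
        else (n - kt).choose (k i - kt) := by
      intro i
      by_cases hi : (i : ℕ) < 2
      · rw [if_pos hi, hH12 i hi]
        exact count_meet n kt (k i) hkt_le_n
      · rw [if_neg hi, hHrest i (by omega)]
        exact count_super n kt (k i) hkt_le_n (hkt_le i)
    have hpt : ∀ i : Fin t, (H i).card =
        ((if (i : ℕ) = 0 then n.choose (k i) - (n - kt).choose (k i) else 0)
          + (if (i : ℕ) = 1 then n.choose (k i) - (n - kt).choose (k i) else 0))
        + (if 2 ≤ (i : ℕ) then (n - kt).choose (k i - kt) else 0) := by
      intro i
      rw [hcard i]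
      by_cases h0 : (i : ℕ) = 0
      · rw [if_pos (by omega), if_pos h0, if_neg (by omega), if_neg (by omega)]
        omega
      · by_cases h1 : (i : ℕ) = 1
        · rw [if_pos (by omega), if_neg h0, if_pos h1, if_neg (by omega)]
          omega
        · rw [if_neg (by omega), if_neg h0, if_neg h1, if_pos (by omega)]
          omega
    have e0 : ∑ i : Fin t, (if (i : ℕ) = 0 then n.choose (k i) - (n - kt).choose (k i) else 0)
        = n.choose (k ⟨0, h0t⟩) - (n - kt).choose (k ⟨0, h0t⟩) := by
      rw [Finset.sum_eq_single (⟨0, h0t⟩ : Fin t)]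
      · simp
      · intro b _ hb
        exact if_neg (fun h => hb (Fin.ext h))
      · intro h; exact absurd (Finset.mem_univ _) h
    have e1 : ∑ i : Fin t, (if (i : ℕ) = 1 then n.choose (k i) - (n - kt).choose (k i) else 0)
        = n.choose (k ⟨1, h1t⟩) - (n - kt).choose (k ⟨1, h1t⟩) := by
      rw [Finset.sum_eq_single (⟨1, h1t⟩ : Fin t)]
      · simp
      · intro b _ hb
        exact if_neg (fun h => hb (Fin.ext h))
      · intro h; exact absurd (Finset.mem_univ _) h
    have eL : ∑ i : Fin t, (H i).card =
        ((∑ i : Fin t, if (i : ℕ) = 0 then n.choose (k i) - (n - kt).choose (k i) else 0)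
          + ∑ i : Fin t, if (i : ℕ) = 1 then n.choose (k i) - (n - kt).choose (k i) else 0)
        + ∑ i : Fin t, if 2 ≤ (i : ℕ) then (n - kt).choose (k i - kt) else 0 := by
      rw [← Finset.sum_add_distrib, ← Finset.sum_add_distrib]
      exact Finset.sum_congr rfl (fun i _ => hpt i)
    have eR : ∑ i ∈ Finset.univ.filter (fun i : Fin t => 2 ≤ (i : ℕ)),
        (n - kt).choose (k i - kt)
        = ∑ i : Fin t, if 2 ≤ (i : ℕ) then (n - kt).choose (k i - kt) else 0 :=
      by rw [Finset.sum_filter]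
    rw [eL, e0, e1, eR]
end

section
/- (Kruskal–Katona cross intersecting version) If 𝒜 ⊆ binomial([n],k) and ℬ ⊆ binomial([n],ℓ) are cross intersecting, then ℒ(|𝒜|, k) and ℒ(|ℬ|, ℓ) are cross intersecting, where ℒ(r, k) denotes the first r sets of binomial([n],k) in lexicographic order. -/
/-!
Reversing the ground set, `i ↦ n - i`, turns the lexicographic order on subsets of `[n]` into the
colexicographic order on subsets of `Fin n`, so `ℒ(r, k)` becomes the final colex segment of `r`
sets of size `k`. Suppose `s` in the final segment of length `|𝒜|` missed `t` in the one of length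
`|ℬ|`. Complementation maps the final segment ending at `s` onto the initial segment ending at
`sᶜ`, so by Kruskal–Katona the `d`-fold shadow of `𝒜ᶜˢ = {aᶜ | a ∈ 𝒜}`, with `d = |sᶜ| - |t|`, is
at least as large as that of this initial segment, which is an initial segment containing `t`.
That shadow is disjoint from `ℬ` by cross-intersection; but the initial segment up to `t` and the
final segment from `t` together cover all sets of size `|t|`, overlapping only in `t`, and `ℬ` is
at least as large as the latter: one set too many.
-/

open Finset

open FinsetFamily

namespace Finset.Colex

variable {α : Type*} [LinearOrder α]

lemma toColex_compl_le_toColex_compl [Fintype α] {s t : Finset α} :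
    toColex sᶜ ≤ toColex tᶜ ↔ toColex t ≤ toColex s := by
  simp only [toColex_le_toColex, mem_compl, not_not]
  exact ⟨fun h a hat has ↦ by obtain ⟨b, hbt, hbs, hab⟩ := h has hat; exact ⟨b, hbs, hbt, hab⟩,
    fun h a has hat ↦ by obtain ⟨b, hbs, hbt, hab⟩ := h hat has; exact ⟨b, hbt, hbs, hab⟩⟩

lemma IsInitSeg.shadow_iterate [Finite α] {𝒜 : Finset (Finset α)} {r : ℕ}
    (h : IsInitSeg 𝒜 r) (d : ℕ) : IsInitSeg (∂^[d] 𝒜) (r - d) := by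
  induction d with
  | zero => simpa
  | succ d ih =>
    rw [Function.iterate_succ_apply', Nat.sub_succ]
    exact ih.shadow

lemma IsInitSeg.initSeg_subset [Fintype α] {𝒜 : Finset (Finset α)} {r : ℕ} {s : Finset α}
    (h : IsInitSeg 𝒜 r) (hs : s ∈ 𝒜) : initSeg s ⊆ 𝒜 := by
  intro t ht
  obtain ⟨hst, hts⟩ := mem_initSeg.1 ht
  obtain heq | hlt := hts.eq_or_lt
  · rwa [toColex_inj.1 heq]
  · exact h.2 hs ⟨hlt, hst ▸ h.1 hs⟩

variable [Fintype α]

def finalSeg (s : Finset α) : Finset (Finset α) := {t | #t = #s ∧ toColex s ≤ toColex t}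

@[simp]
lemma mem_finalSeg {s t : Finset α} : t ∈ finalSeg s ↔ #t = #s ∧ toColex s ≤ toColex t := by
  simp [finalSeg]

lemma compls_initSeg_compl (s : Finset α) : (initSeg sᶜ)ᶜˢ = finalSeg s := by
  ext t
  have := card_le_univ s
  have := card_le_univ t
  simp only [mem_compls, mem_initSeg, mem_finalSeg, toColex_compl_le_toColex_compl, card_compl]
  constructor <;> rintro ⟨hc, hle⟩ <;> exact ⟨by omega, hle⟩

lemma card_initSeg_add_card_finalSeg (s : Finset α) :
    #(initSeg s) + #(finalSeg s) = (Fintype.card α).choose #s + 1 := by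
  have hunion : initSeg s ∪ finalSeg s = powersetCard #s univ := by
    ext t
    simp only [mem_union, mem_initSeg, mem_finalSeg, mem_powersetCard, subset_univ, true_and]
    constructor
    · rintro (⟨h, -⟩ | ⟨h, -⟩) <;> omega
    · intro h
      exact (le_total (toColex t) (toColex s)).imp (⟨h.symm, ·⟩) (⟨h, ·⟩)
  have hinter : initSeg s ∩ finalSeg s = {s} := by
    ext t
    simp only [mem_inter, mem_initSeg, mem_finalSeg, mem_singleton]
    constructor
    · rintro ⟨⟨-, hts⟩, -, hst⟩
      exact toColex_inj.1 (le_antisymm hts hst)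
    · rintro rfl
      exact ⟨⟨rfl, le_rfl⟩, rfl, le_rfl⟩
  rw [← card_union_add_card_inter, hunion, hinter, card_powersetCard, card_univ, card_singleton]

end Finset.Colex

open Finset.Colex

lemma disjoint_shadow_iterate_compls {α : Type*} [DecidableEq α] [Fintype α]
    {𝒜 ℬ : Finset (Finset α)} (h𝒜ℬ : ∀ a ∈ 𝒜, ∀ b ∈ ℬ, (a ∩ b).Nonempty) (d : ℕ) :
    Disjoint (∂^[d] 𝒜ᶜˢ) ℬ := by
  refine disjoint_left.2 fun b hb hbℬ ↦ ?_
  obtain ⟨c, hc, hbc, -⟩ := mem_shadow_iterate_iff_exists_sdiff.1 hb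
  obtain ⟨x, hx⟩ := h𝒜ℬ _ (mem_compls.1 hc) b hbℬ
  obtain ⟨hxc, hxb⟩ := mem_inter.1 hx
  exact mem_compl.1 hxc (hbc hxb)

theorem inter_nonempty_of_card_finalSeg_le {n : ℕ} {𝒜 ℬ : Finset (Finset (Fin n))}
    {s t : Finset (Fin n)} (h𝒜 : (𝒜 : Set (Finset (Fin n))).Sized #s)
    (hℬ : (ℬ : Set (Finset (Fin n))).Sized #t) (h𝒜ℬ : ∀ a ∈ 𝒜, ∀ b ∈ ℬ, (a ∩ b).Nonempty)
    (hs : #(finalSeg s) ≤ #𝒜) (ht : #(finalSeg t) ≤ #ℬ) : (s ∩ t).Nonempty := by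
  by_contra hst
  have hts : t ⊆ sᶜ := fun x hxt ↦ mem_compl.2 fun hxs ↦ hst ⟨x, mem_inter.2 ⟨hxs, hxt⟩⟩
  set d := #sᶜ - #t
  have hcard : #t = #sᶜ - d := by have := card_le_card hts; omega
  have h𝒜c : (𝒜ᶜˢ : Set (Finset (Fin n))).Sized #sᶜ := by
    simpa [card_compl] using h𝒜.compls
  have kk : #(∂^[d] (initSeg sᶜ)) ≤ #(∂^[d] 𝒜ᶜˢ) :=
    iterated_kk h𝒜c (by rwa [card_compls, ← card_compls, compls_initSeg_compl]) isInitSeg_initSeg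
  have hinit : initSeg t ⊆ ∂^[d] (initSeg sᶜ) :=
    (IsInitSeg.shadow_iterate isInitSeg_initSeg d).initSeg_subset
      (mem_shadow_iterate_iff_exists_sdiff.2 ⟨sᶜ, mem_initSeg_self, hts, by
        rw [card_sdiff_of_subset hts]⟩)
  have hunion : (((∂^[d] 𝒜ᶜˢ) ∪ ℬ : Finset _) : Set (Finset (Fin n))).Sized #t := by
    rw [coe_union, Set.sized_union, hcard]
    exact ⟨h𝒜c.shadow_iterate, hcard ▸ hℬ⟩
  have : n.choose #t + 1 ≤ n.choose #t := calc
    n.choose #t + 1 = #(initSeg t) + #(finalSeg t) := by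
      rw [card_initSeg_add_card_finalSeg, Fintype.card_fin]
    _ ≤ #(∂^[d] (initSeg sᶜ)) + #ℬ := add_le_add (card_le_card hinit) ht
    _ ≤ #(∂^[d] 𝒜ᶜˢ) + #ℬ := Nat.add_le_add_right kk _
    _ = #(∂^[d] 𝒜ᶜˢ ∪ ℬ) := (card_union_of_disjoint (disjoint_shadow_iterate_compls h𝒜ℬ d)).symm
    _ ≤ n.choose #t := by simpa using hunion.card_le
  omega

lemma lexLE_iff_forall_exists_lt {S T : Finset ℕ} :
    lexLE S T ↔ ∀ y ∈ T \ S, ∃ x ∈ S \ T, x < y := by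
  rcases (T \ S).eq_empty_or_nonempty with hTS | hTS
  · simp [lexLE, hTS, sdiff_eq_empty_iff_subset.1 hTS]
  rw [lexLE, or_iff_right fun h ↦ hTS.ne_empty (sdiff_eq_empty_iff_subset.2 h), ← coe_min' hTS,
    ← not_le, Finset.le_min_iff]
  push Not
  simp only [WithTop.coe_lt_coe]
  exact ⟨fun ⟨x, hx, hlt⟩ y hy ↦ ⟨x, hx, hlt.trans_le (min'_le _ y hy)⟩,
    fun h ↦ h _ (min'_mem _ hTS)⟩

/-- Reversing the ground set turns the lexicographic order on subsets of `[n]` into colex on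
subsets of `Fin n`. -/
def revEmbedding (n : ℕ) : Fin n ↪ ℕ where
  toFun i := n - i
  inj' i j h := Fin.ext (by have := i.isLt; have := j.isLt; simp only at h; omega)

@[simp]
lemma revEmbedding_apply {n : ℕ} (i : Fin n) : revEmbedding n i = n - i := rfl

lemma revEmbedding_strictAnti (n : ℕ) : StrictAnti (revEmbedding n) := fun i j h ↦ by
  have := j.isLt
  simp only [revEmbedding_apply]
  omega

lemma map_revEmbedding_univ (n : ℕ) : univ.map (revEmbedding n) = Icc 1 n := by
  ext x
  simp only [mem_map, mem_univ, true_and, mem_Icc, revEmbedding_apply]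
  constructor
  · rintro ⟨i, rfl⟩
    have := i.isLt
    omega
  · rintro ⟨h1, h2⟩
    exact ⟨⟨n - x, by omega⟩, by simp only; omega⟩

lemma ksubsets_eq_map (n k : ℕ) :
    ksubsets n k = (powersetCard k univ).map (mapEmbedding (revEmbedding n)).toEmbedding := by
  rw [ksubsets, ← map_revEmbedding_univ, powersetCard_map]

lemma lexLE_map_iff {α : Type*} [LinearOrder α] {f : α ↪ ℕ} (hf : StrictAnti f)
    {s t : Finset α} : lexLE (s.map f) (t.map f) ↔ toColex t ≤ toColex s := by
  rw [lexLE_iff_forall_exists_lt, ← Finset.map_sdiff, ← Finset.map_sdiff, forall_mem_map]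
  simp only [mem_map, mem_sdiff, toColex_le_toColex, and_imp, exists_exists_and_eq_and,
    hf.lt_iff_gt]
  refine forall_congr' fun a ↦ imp_congr_right fun hat ↦ imp_congr_right fun _ ↦
    exists_congr fun b ↦ ⟨fun ⟨⟨hbs, hbt⟩, hab⟩ ↦ ⟨hbs, hbt, hab.le⟩, fun ⟨hbs, hbt, hab⟩ ↦
      ⟨⟨hbs, hbt⟩, hab.lt_of_ne (ne_of_mem_of_not_mem hat hbt)⟩⟩

lemma card_filter_lexLE_map_revEmbedding {n : ℕ} (s : Finset (Fin n)) :
    #((ksubsets n #s).filter (fun G ↦ lexLE G (s.map (revEmbedding n)))) = #(finalSeg s) := by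
  rw [ksubsets_eq_map, filter_map, card_map]
  congr 1
  ext u
  simp [mem_finalSeg, lexLE_map_iff (revEmbedding_strictAnti n), mem_powersetCard]

lemma mem_Lnum_iff {n r k : ℕ} {X : Finset ℕ} :
    X ∈ Lnum n r k ↔
      ∃ s : Finset (Fin n), #s = k ∧ #(finalSeg s) ≤ r ∧ s.map (revEmbedding n) = X := by
  rw [Lnum, mem_filter]
  constructor
  · rintro ⟨hXk, hXr⟩
    rw [ksubsets_eq_map, mem_map] at hXk
    obtain ⟨s, hs, rfl⟩ := hXk
    obtain rfl := (mem_powersetCard.1 hs).2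
    exact ⟨s, rfl, card_filter_lexLE_map_revEmbedding s ▸ hXr, rfl⟩
  · rintro ⟨s, rfl, hs, rfl⟩
    refine ⟨?_, (card_filter_lexLE_map_revEmbedding s).symm ▸ hs⟩
    rw [ksubsets_eq_map]
    exact mem_map_of_mem _ (mem_powersetCard.2 ⟨subset_univ _, rfl⟩)

lemma exists_sized_map_eq_of_subset_ksubsets {n k : ℕ} {A : Finset (Finset ℕ)}
    (hA : A ⊆ ksubsets n k) : ∃ 𝒜 : Finset (Finset (Fin n)),
      (𝒜 : Set (Finset (Fin n))).Sized k ∧ 𝒜.map (mapEmbedding (revEmbedding n)).toEmbedding = A := by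
  rw [ksubsets_eq_map, subset_map_iff] at hA
  obtain ⟨𝒜, h𝒜, rfl⟩ := hA
  exact ⟨𝒜, subset_powersetCard_univ_iff.1 h𝒜, rfl⟩

theorem stmt6 (n k l : ℕ) (A B : Finset (Finset ℕ))
    (hA : A ⊆ ksubsets n k) (hB : B ⊆ ksubsets n l)
    (h : crossInt A B) :
    crossInt (Lnum n A.card k) (Lnum n B.card l) := by
  intro X hX Y hY
  obtain ⟨s, rfl, hs, rfl⟩ := mem_Lnum_iff.1 hX
  obtain ⟨t, rfl, ht, rfl⟩ := mem_Lnum_iff.1 hY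
  obtain ⟨𝒜, h𝒜, rfl⟩ := exists_sized_map_eq_of_subset_ksubsets hA
  obtain ⟨ℬ, hℬ, rfl⟩ := exists_sized_map_eq_of_subset_ksubsets hB
  rw [← map_inter, map_nonempty]
  refine inter_nonempty_of_card_finalSeg_le h𝒜 hℬ (fun a ha b hb ↦ ?_)
    (by simpa using hs) (by simpa using ht)
  simpa [← Finset.map_inter] using h _ (mem_map_of_mem _ ha) _ (mem_map_of_mem _ hb)
end

section
/- Let a, b, n be positive integers with a + b ≤ n. Let P ⊆ [n] with |P| ≤ a, and let Q be the partner of P (i.e., P ∩ Q = {q}, P ∪ Q = [q] where q = max of both). Then ℒ([n], Q, b) is the maximum b-uniform family cross intersecting with ℒ([n], P, a): that is, ℒ(Q,b) is cross intersecting with ℒ(P,a), and any ℬ ⊆ binomial([n],b) cross intersecting with ℒ(P,a) satisfies ℬ ⊆ ℒ(Q,b) when ℬ is L-initial, and in general |ℬ| ≤ |ℒ(Q,b)|. -/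
open Finset

/- ### Auxiliary lemmas -/

lemma coe_lt_min_of {s : Finset ℕ} {u : ℕ} (h : ∀ x ∈ s, u < x) : (u : WithTop ℕ) < s.min := by
  rcases s.eq_empty_or_nonempty with rfl | hs
  · simp [Finset.min_empty]
  · rw [← Finset.coe_min' hs]
    exact WithTop.coe_lt_coe.2 (h _ (Finset.min'_mem s hs))

/-- Structure of the lex order. -/
lemma lex_cases {A B : Finset ℕ} (h : lexLE A B) :
    B ⊆ A ∨ ∃ t, t ∈ A ∧ t ∉ B ∧ (∀ x, x < t → (x ∈ A ↔ x ∈ B)) ∧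
      (B \ A).Nonempty ∧ ∀ x ∈ B \ A, t < x := by
  by_cases hBA : B ⊆ A
  · exact Or.inl hBA
  rcases h with h | h
  · exact absurd h hBA
  right
  have hne : (A \ B).Nonempty := by
    rcases (A \ B).eq_empty_or_nonempty with he | hne
    · rw [he, Finset.min_empty] at h
      exact absurd h (by simp)
    · exact hne
  refine ⟨(A \ B).min' hne, ?_, ?_, ?_, Finset.sdiff_nonempty.2 hBA, ?_⟩
  · exact (Finset.mem_sdiff.1 ((A \ B).min'_mem hne)).1
  · exact (Finset.mem_sdiff.1 ((A \ B).min'_mem hne)).2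
  · intro x hx
    constructor
    · intro hxA
      by_contra hxB
      exact absurd (Finset.min'_le _ _ (Finset.mem_sdiff.2 ⟨hxA, hxB⟩)) (not_le.2 hx)
    · intro hxB
      by_contra hxA
      have h1 : (B \ A).min ≤ (x : WithTop ℕ) := Finset.min_le (Finset.mem_sdiff.2 ⟨hxB, hxA⟩)
      have h2 : ((A \ B).min' hne : WithTop ℕ) = (A \ B).min := Finset.coe_min' hne
      have : ((A \ B).min' hne : WithTop ℕ) < (x : WithTop ℕ) := by
        rw [h2]; exact lt_of_lt_of_le h h1
      exact absurd (WithTop.coe_lt_coe.1 this) (not_lt.2 (le_of_lt hx))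
  · intro x hx
    have h1 : (B \ A).min ≤ (x : WithTop ℕ) := Finset.min_le hx
    have h2 : ((A \ B).min' hne : WithTop ℕ) = (A \ B).min := Finset.coe_min' hne
    have : ((A \ B).min' hne : WithTop ℕ) < (x : WithTop ℕ) := by
      rw [h2]; exact lt_of_lt_of_le h h1
    exact WithTop.coe_lt_coe.1 this

lemma mem_ksubsets {n k : ℕ} {F : Finset ℕ} :
    F ∈ ksubsets n k ↔ F ⊆ Finset.Icc 1 n ∧ F.card = k := Finset.mem_powersetCard

lemma mem_Lfam {n k : ℕ} {R F : Finset ℕ} :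
    F ∈ Lfam n R k ↔ (F ⊆ Finset.Icc 1 n ∧ F.card = k) ∧ lexLE F R := by
  rw [Lfam, Finset.mem_filter, mem_ksubsets]

/-- Cross-intersection of the two lex families. -/
lemma partner_crossInt {n a b : ℕ} {P Q : Finset ℕ}
    (hQ : isPartner P Q) : crossInt (Lfam n P a) (Lfam n Q b) := by
  obtain ⟨q, hqI, hqU⟩ := hQ
  have hqP : q ∈ P := (Finset.mem_inter.1 (hqI ▸ Finset.mem_singleton_self q)).1
  have hqQ : q ∈ Q := (Finset.mem_inter.1 (hqI ▸ Finset.mem_singleton_self q)).2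
  have hPq : P ⊆ Finset.Icc 1 q := hqU ▸ Finset.subset_union_left
  have hQq : Q ⊆ Finset.Icc 1 q := hqU ▸ Finset.subset_union_right
  have hPQ : ∀ x, 1 ≤ x → x ≤ q → x ∉ P → x ∈ Q := by
    intro x h1 h2 hxP
    have : x ∈ P ∪ Q := hqU.symm ▸ Finset.mem_Icc.2 ⟨h1, h2⟩
    exact (Finset.mem_union.1 this).resolve_left hxP
  have hQP : ∀ x, 1 ≤ x → x ≤ q → x ∉ Q → x ∈ P := by
    intro x h1 h2 hxQ
    have : x ∈ P ∪ Q := hqU.symm ▸ Finset.mem_Icc.2 ⟨h1, h2⟩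
    exact (Finset.mem_union.1 this).resolve_right hxQ
  intro F hF H hH
  obtain ⟨⟨hFn, _⟩, hFlex⟩ := mem_Lfam.1 hF
  obtain ⟨⟨hHn, _⟩, hHlex⟩ := mem_Lfam.1 hH
  rcases lex_cases hFlex with hPF | ⟨t, htF, htP, hiffF, hPFne, hboundF⟩ <;>
    rcases lex_cases hHlex with hQH | ⟨u, huH, huQ, hiffH, hQHne, hboundH⟩
  · exact ⟨q, Finset.mem_inter.2 ⟨hPF hqP, hQH hqQ⟩⟩
  · -- P ⊆ F, u-case for H
    rcases lt_trichotomy u q with hlt | rfl | hgt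
    · -- u < q, u ∉ Q so u ∈ P ⊆ F
      have h1 : 1 ≤ u := (Finset.mem_Icc.1 (hHn huH)).1
      exact ⟨u, Finset.mem_inter.2 ⟨hPF (hQP u h1 (le_of_lt hlt) huQ), huH⟩⟩
    · exact absurd hqQ huQ
    · have : q ∈ H := (hiffH q hgt).2 hqQ
      exact ⟨q, Finset.mem_inter.2 ⟨hPF hqP, this⟩⟩
  · -- t-case for F, Q ⊆ H
    rcases lt_trichotomy t q with hlt | rfl | hgt
    · have h1 : 1 ≤ t := (Finset.mem_Icc.1 (hFn htF)).1
      exact ⟨t, Finset.mem_inter.2 ⟨htF, hQH (hPQ t h1 (le_of_lt hlt) htP)⟩⟩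
    · exact absurd hqP htP
    · have : q ∈ F := (hiffF q hgt).2 hqP
      exact ⟨q, Finset.mem_inter.2 ⟨this, hQH hqQ⟩⟩
  · -- both strict cases
    obtain ⟨s, hs⟩ := hPFne
    have hsq : s ≤ q := (Finset.mem_Icc.1 (hPq (Finset.mem_sdiff.1 hs).1)).2
    have htq : t < q := lt_of_lt_of_le (hboundF s hs) hsq
    obtain ⟨s', hs'⟩ := hQHne
    have hs'q : s' ≤ q := (Finset.mem_Icc.1 (hQq (Finset.mem_sdiff.1 hs').1)).2
    have huq : u < q := lt_of_lt_of_le (hboundH s' hs') hs'q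
    have htQ : t ∈ Q := hPQ t (Finset.mem_Icc.1 (hFn htF)).1 (le_of_lt htq) htP
    have huP : u ∈ P := hQP u (Finset.mem_Icc.1 (hHn huH)).1 (le_of_lt huq) huQ
    rcases lt_trichotomy t u with hlt | rfl | hgt
    · exact ⟨t, Finset.mem_inter.2 ⟨htF, (hiffH t hlt).2 htQ⟩⟩
    · exact absurd huP htP
    · exact ⟨u, Finset.mem_inter.2 ⟨(hiffF u hgt).2 huP, huH⟩⟩

/-- For any `b`-set beyond `Q` in lex order, there is a disjoint member of `ℒ(P,a)`. -/
lemma exists_disjoint {n a b : ℕ} (hab : a + b ≤ n) {P Q H : Finset ℕ}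
    (hP : P ⊆ Finset.Icc 1 n) (hPa : P.card ≤ a)
    (hQ : isPartner P Q)
    (hHn : H ⊆ Finset.Icc 1 n) (hHb : H.card = b)
    (hnot : ¬ lexLE H Q) :
    ∃ F ∈ Lfam n P a, F ∩ H = ∅ := by
  obtain ⟨q, hqI, hqU⟩ := hQ
  have hqP : q ∈ P := (Finset.mem_inter.1 (hqI ▸ Finset.mem_singleton_self q)).1
  have hPq : P ⊆ Finset.Icc 1 q := hqU ▸ Finset.subset_union_left
  have hQq : Q ⊆ Finset.Icc 1 q := hqU ▸ Finset.subset_union_right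
  have hqn : q ≤ n := (Finset.mem_Icc.1 (hP hqP)).2
  rw [lexLE, not_or, not_lt] at hnot
  obtain ⟨hQH, hmin⟩ := hnot
  have hQHne : (Q \ H).Nonempty := Finset.sdiff_nonempty.2 hQH
  set u := (Q \ H).min' hQHne with hu
  have huQ : u ∈ Q := (Finset.mem_sdiff.1 ((Q \ H).min'_mem hQHne)).1
  have huH : u ∉ H := (Finset.mem_sdiff.1 ((Q \ H).min'_mem hQHne)).2
  have hucoe : (u : WithTop ℕ) = (Q \ H).min := Finset.coe_min' hQHne
  have hHtoQ : ∀ x, x < u → x ∈ H → x ∈ Q := by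
    intro x hx hxH
    by_contra hxQ
    have h1 : (H \ Q).min ≤ (x : WithTop ℕ) := Finset.min_le (Finset.mem_sdiff.2 ⟨hxH, hxQ⟩)
    have h2 : ((Q \ H).min : WithTop ℕ) ≤ (x : WithTop ℕ) := le_trans hmin h1
    rw [← hucoe] at h2
    exact absurd (WithTop.coe_le_coe.1 h2) (not_le.2 hx)
  have hu1 : 1 ≤ u := (Finset.mem_Icc.1 (hQq huQ)).1
  have huq : u ≤ q := (Finset.mem_Icc.1 (hQq huQ)).2
  -- the seed set
  set F₀ : Finset ℕ := insert u (P ∩ Finset.Ico 1 u) with hF₀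
  have hu₀ : u ∈ F₀ := by rw [hF₀]; exact Finset.mem_insert_self _ _
  have hmem₀ : ∀ x ∈ P ∩ Finset.Ico 1 u, x ∈ F₀ := by
    rw [hF₀]; exact fun x hx => Finset.mem_insert_of_mem hx
  have hF₀n : F₀ ⊆ Finset.Icc 1 n := by
    intro x hx
    rcases Finset.mem_insert.1 hx with rfl | hx
    · exact Finset.mem_Icc.2 ⟨hu1, le_trans huq hqn⟩
    · exact hP (Finset.mem_inter.1 hx).1
  have hF₀H : ∀ x ∈ F₀, x ∉ H := by
    intro x hx hxH
    rcases Finset.mem_insert.1 hx with rfl | hx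
    · exact huH hxH
    · obtain ⟨hxP, hxI⟩ := Finset.mem_inter.1 hx
      have hxu : x < u := (Finset.mem_Ico.1 hxI).2
      have hxQ : x ∈ Q := hHtoQ x hxu hxH
      have : x ∈ ({q} : Finset ℕ) := hqI ▸ Finset.mem_inter.2 ⟨hxP, hxQ⟩
      have hxq : x = q := Finset.mem_singleton.1 this
      exact absurd (lt_of_lt_of_le hxu huq) (by rw [hxq]; exact lt_irrefl q)
  have hF₀card : F₀.card ≤ a := by
    by_cases huq' : u = q
    · have hsub : F₀ ⊆ P := by
        intro x hx
        rcases Finset.mem_insert.1 hx with rfl | hx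
        · exact huq' ▸ hqP
        · exact (Finset.mem_inter.1 hx).1
      exact le_trans (Finset.card_le_card hsub) hPa
    · have hsub : P ∩ Finset.Ico 1 u ⊆ P.erase q := by
        intro x hx
        obtain ⟨hxP, hxI⟩ := Finset.mem_inter.1 hx
        have : x < q := lt_of_lt_of_le (Finset.mem_Ico.1 hxI).2 huq
        exact Finset.mem_erase.2 ⟨ne_of_lt this, hxP⟩
      calc F₀.card ≤ (P ∩ Finset.Ico 1 u).card + 1 := Finset.card_insert_le _ _
        _ ≤ (P.erase q).card + 1 := by
            exact Nat.add_le_add_right (Finset.card_le_card hsub) 1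
        _ = (P.card - 1) + 1 := by rw [Finset.card_erase_of_mem hqP]
        _ = P.card := Nat.sub_add_cancel (Finset.card_pos.2 ⟨q, hqP⟩)
        _ ≤ a := hPa
  -- extend F₀ with fresh elements
  set S : Finset ℕ := Finset.Icc 1 n \ (H ∪ F₀) with hS
  have hScard : a - F₀.card ≤ S.card := by
    have hsub : H ∪ F₀ ⊆ Finset.Icc 1 n := Finset.union_subset hHn hF₀n
    have h1 : S.card = n - (H ∪ F₀).card := by
      rw [hS, Finset.card_sdiff_of_subset hsub, Nat.card_Icc]
      simp
    have h2 : (H ∪ F₀).card ≤ b + F₀.card := by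
      calc (H ∪ F₀).card ≤ H.card + F₀.card := Finset.card_union_le _ _
        _ = b + F₀.card := by rw [hHb]
    omega
  obtain ⟨T, hTS, hTcard⟩ := Finset.exists_subset_card_eq hScard
  set F : Finset ℕ := F₀ ∪ T with hF
  have hTF₀ : Disjoint F₀ T := by
    refine Finset.disjoint_left.2 fun x hx hxT => ?_
    have := hTS hxT
    rw [hS, Finset.mem_sdiff] at this
    exact this.2 (Finset.mem_union_right _ hx)
  have hFcard : F.card = a := by
    rw [hF, Finset.card_union_of_disjoint hTF₀, hTcard]
    omega
  have hFn : F ⊆ Finset.Icc 1 n := by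
    refine Finset.union_subset hF₀n fun x hx => ?_
    have := hTS hx; rw [hS, Finset.mem_sdiff] at this; exact this.1
  have hFH : F ∩ H = ∅ := by
    rw [Finset.eq_empty_iff_forall_notMem]
    intro x hx
    obtain ⟨hxF, hxH⟩ := Finset.mem_inter.1 hx
    rcases Finset.mem_union.1 hxF with hx0 | hxT
    · exact hF₀H x hx0 hxH
    · have := hTS hxT; rw [hS, Finset.mem_sdiff] at this
      exact this.2 (Finset.mem_union_left _ hxH)
  refine ⟨F, mem_Lfam.2 ⟨⟨hFn, hFcard⟩, ?_⟩, hFH⟩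
  -- lexLE F P
  by_cases huP : u ∈ P
  · -- then u = q and P ⊆ F
    have huq' : u = q := by
      have : u ∈ ({q} : Finset ℕ) := hqI ▸ Finset.mem_inter.2 ⟨huP, huQ⟩
      exact Finset.mem_singleton.1 this
    left
    intro x hxP
    rcases eq_or_lt_of_le (Finset.mem_Icc.1 (hPq hxP)).2 with heq | hxq
    · exact Finset.mem_union_left _ (by rw [← huq'] at heq; exact heq ▸ hu₀)
    · have : x ∈ P ∩ Finset.Ico 1 u := Finset.mem_inter.2
        ⟨hxP, Finset.mem_Ico.2 ⟨(Finset.mem_Icc.1 (hPq hxP)).1, huq' ▸ hxq⟩⟩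
      exact Finset.mem_union_left _ (hmem₀ _ this)
  · right
    have huF : u ∈ F := Finset.mem_union_left _ hu₀
    have h1 : (F \ P).min ≤ (u : WithTop ℕ) :=
      Finset.min_le (Finset.mem_sdiff.2 ⟨huF, huP⟩)
    have h2 : (u : WithTop ℕ) < (P \ F).min := by
      refine coe_lt_min_of fun x hx => ?_
      obtain ⟨hxP, hxF⟩ := Finset.mem_sdiff.1 hx
      by_contra hle
      push_neg at hle
      rcases eq_or_lt_of_le hle with rfl | hxu
      · exact huP hxP
      · exact hxF (Finset.mem_union_left _ (hmem₀ _
          (Finset.mem_inter.2 ⟨hxP, Finset.mem_Ico.2 ⟨(Finset.mem_Icc.1 (hP hxP)).1, hxu⟩⟩)))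
    exact lt_of_le_of_lt h1 h2

theorem stmt7 (a b n : ℕ) (ha : 1 ≤ a) (hb : 1 ≤ b) (hab : a + b ≤ n)
    (P Q : Finset ℕ) (hP : P ⊆ Finset.Icc 1 n) (hPa : P.card ≤ a)
    (hQ : isPartner P Q) :
    crossInt (Lfam n P a) (Lfam n Q b) ∧
    (∀ B ⊆ ksubsets n b, crossInt (Lfam n P a) B → B.card ≤ (Lfam n Q b).card) ∧
    (∀ B ⊆ ksubsets n b, crossInt (Lfam n P a) B → B = Lnum n B.card b →
      B ⊆ Lfam n Q b) := by
  have key : ∀ B ⊆ ksubsets n b, crossInt (Lfam n P a) B → B ⊆ Lfam n Q b := by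
    intro B hB hcross H hH
    obtain ⟨hHn, hHb⟩ := mem_ksubsets.1 (hB hH)
    by_contra hmem
    have hnot : ¬ lexLE H Q := by
      intro hlex
      exact hmem (mem_Lfam.2 ⟨⟨hHn, hHb⟩, hlex⟩)
    obtain ⟨F, hF, hFH⟩ := exists_disjoint hab hP hPa hQ hHn hHb hnot
    have := hcross F hF H hH
    rw [hFH] at this
    exact Finset.not_nonempty_empty this
  exact ⟨partner_crossInt hQ,
    fun B hB hcross => Finset.card_le_card (key B hB hcross),
    fun B hB hcross _ => key B hB hcross⟩
end

section
/- Let a, b, n be positive integers with n ≥ a + b, and let A ⊆ [n] with |A| = a. Let B be the b-partner of A. Then ℒ([n], A, a) and ℒ([n], B, b) are cross intersecting, and ℒ(B, b) is maximal to ℒ(A, a): no strictly larger b-uniform family containing ℒ(B,b) is cross intersecting with ℒ(A,a). -/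
open Finset

lemma lexLE_iff_cert (A B : Finset ℕ) :
    lexLE A B ↔ B ⊆ A ∨ ∃ m, m ∈ A ∧ m ∉ B ∧ ∀ x ∈ B, x < m → x ∈ A := by
  constructor
  · rintro (h | h)
    · exact Or.inl h
    · right
      have hne : (A \ B).Nonempty := by
        rw [← Finset.card_pos]
        by_contra hc
        simp only [not_lt, Nat.le_zero, Finset.card_eq_zero] at hc
        rw [hc] at h
        simp at h
      set m := (A \ B).min' hne with hm
      have hmem : m ∈ A \ B := Finset.min'_mem _ _
      refine ⟨m, (Finset.mem_sdiff.1 hmem).1, (Finset.mem_sdiff.1 hmem).2, ?_⟩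
      intro x hx hxm
      by_contra hxA
      have h1 : (B \ A).min ≤ x := Finset.min_le (Finset.mem_sdiff.2 ⟨hx, hxA⟩)
      have h2 : (A \ B).min = (m : WithTop ℕ) := (Finset.coe_min' hne).symm
      rw [h2] at h
      have : (m : WithTop ℕ) < (x : WithTop ℕ) := lt_of_lt_of_le h h1
      exact absurd (WithTop.coe_lt_coe.1 this) (not_lt.2 (le_of_lt hxm))
  · rintro (h | ⟨m, hmA, hmB, hcert⟩)
    · exact Or.inl h
    · right
      have h1 : (A \ B).min ≤ (m : WithTop ℕ) := Finset.min_le (Finset.mem_sdiff.2 ⟨hmA, hmB⟩)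
      have h2 : ((m + 1 : ℕ) : WithTop ℕ) ≤ (B \ A).min := by
        apply Finset.le_min
        intro x hx
        rw [Finset.mem_sdiff] at hx
        have : ¬ x < m := fun hlt => hx.2 (hcert x hx.1 hlt)
        have hne : x ≠ m := fun he => hmB (he ▸ hx.1)
        have : m + 1 ≤ x := Nat.succ_le_of_lt (lt_of_le_of_ne (not_lt.1 this) (Ne.symm hne))
        exact WithTop.coe_le_coe.2 this
      calc (A \ B).min ≤ (m : WithTop ℕ) := h1
        _ < ((m+1 : ℕ) : WithTop ℕ) := by exact_mod_cast Nat.lt_succ_self m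
        _ ≤ (B \ A).min := h2


lemma lexLE_refl (A : Finset ℕ) : lexLE A A := Or.inl (Finset.Subset.refl A)

lemma lexLE_trans {A B C : Finset ℕ} (h1 : lexLE A B) (h2 : lexLE B C) : lexLE A C := by
  rw [lexLE_iff_cert] at h1 h2 ⊢
  rcases h1 with h1 | ⟨m1, hm1A, hm1B, hc1⟩
  · rcases h2 with h2 | ⟨m2, hm2B, hm2C, hc2⟩
    · exact Or.inl (h2.trans h1)
    · exact Or.inr ⟨m2, h1 hm2B, hm2C, fun x hx hlt => h1 (hc2 x hx hlt)⟩
  · rcases h2 with h2 | ⟨m2, hm2B, hm2C, hc2⟩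
    · exact Or.inr ⟨m1, hm1A, fun h => hm1B (h2 h), fun x hx hlt => hc1 x (h2 hx) hlt⟩
    · right
      rcases le_or_gt m1 m2 with hle | hlt
      · refine ⟨m1, hm1A, ?_, ?_⟩
        · intro hm1C
          rcases lt_or_eq_of_le hle with h | h
          · exact hm1B (hc2 m1 hm1C h)
          · exact hm2C (h ▸ hm1C)
        · intro x hx hxm
          exact hc1 x (hc2 x hx (lt_of_lt_of_le hxm hle)) hxm
      · exact ⟨m2, hc1 m2 hm2B hlt, hm2C, fun x hx hxm => hc1 x (hc2 x hx hxm) (hxm.trans hlt)⟩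


section
variable {q : ℕ} {A H : Finset ℕ}

lemma partner_mem_q (hi : A ∩ H = {q}) : q ∈ A ∧ q ∈ H := by
  have : q ∈ A ∩ H := hi ▸ Finset.mem_singleton_self q
  exact ⟨(Finset.mem_inter.1 this).1, (Finset.mem_inter.1 this).2⟩

lemma partner_le_q (hu : A ∪ H = Finset.Icc 1 q) :
    (∀ x ∈ A, 1 ≤ x ∧ x ≤ q) ∧ (∀ x ∈ H, 1 ≤ x ∧ x ≤ q) := by
  constructor <;> intro x hx <;>
  · have : x ∈ Finset.Icc 1 q := by
      rw [← hu, Finset.mem_union]; tauto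
    exact Finset.mem_Icc.1 this

lemma partner_cover (hu : A ∪ H = Finset.Icc 1 q) {x : ℕ} (h1 : 1 ≤ x) (h2 : x ≤ q) :
    x ∈ A ∨ x ∈ H := by
  have : x ∈ A ∪ H := hu ▸ Finset.mem_Icc.2 ⟨h1, h2⟩
  exact Finset.mem_union.1 this

lemma partner_inter (hi : A ∩ H = {q}) {x : ℕ} (hA : x ∈ A) (hH : x ∈ H) : x = q := by
  have : x ∈ A ∩ H := Finset.mem_inter.2 ⟨hA, hH⟩
  rwa [hi, Finset.mem_singleton] at this

lemma core_aux {F G : Finset ℕ} {m m' : ℕ}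
    (hi : A ∩ H = {q}) (hu : A ∪ H = Finset.Icc 1 q)
    (h1m : 1 ≤ m)
    (hmF : m ∈ F) (hmA : m ∉ A) (hcF : ∀ x ∈ A, x < m → x ∈ F)
    (hmG' : m' ∈ G) (hcG : ∀ x ∈ H, x < m' → x ∈ G)
    (hlt : m < m') : (F ∩ G).Nonempty := by
  rcases le_or_gt m q with hmq | hmq
  · have hmH : m ∈ H := (partner_cover hu h1m hmq).resolve_left hmA
    exact ⟨m, Finset.mem_inter.2 ⟨hmF, hcG m hmH hlt⟩⟩
  · obtain ⟨hqA, hqH⟩ := partner_mem_q hi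
    have hqF : q ∈ F := hcF q hqA hmq
    have hqG : q ∈ G := hcG q hqH (hmq.trans hlt)
    exact ⟨q, Finset.mem_inter.2 ⟨hqF, hqG⟩⟩

lemma lexLE_cross {F G : Finset ℕ}
    (hi : A ∩ H = {q}) (hu : A ∪ H = Finset.Icc 1 q)
    (hF1 : ∀ x ∈ F, 1 ≤ x) (hG1 : ∀ x ∈ G, 1 ≤ x)
    (hFA : lexLE F A) (hGH : lexLE G H) : (F ∩ G).Nonempty := by
  obtain ⟨hqA, hqH⟩ := partner_mem_q hi
  rw [lexLE_iff_cert] at hFA hGH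
  rcases hFA with hAF | ⟨m, hmF, hmA, hcF⟩
  · rcases hGH with hHG | ⟨m', hmG', hmH', hcG⟩
    · exact ⟨q, Finset.mem_inter.2 ⟨hAF hqA, hHG hqH⟩⟩
    · -- A ⊆ F, cert m' for G ≼ H
      rcases le_or_gt m' q with hq' | hq'
      · have : m' ∈ A := (partner_cover hu (hG1 m' hmG') hq').resolve_right hmH'
        exact ⟨m', Finset.mem_inter.2 ⟨hAF this, hmG'⟩⟩
      · have hHG : H ⊆ G := fun x hx =>
          hcG x hx (lt_of_le_of_lt ((partner_le_q hu).2 x hx).2 hq')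
        exact ⟨q, Finset.mem_inter.2 ⟨hAF hqA, hHG hqH⟩⟩
  · rcases hGH with hHG | ⟨m', hmG', hmH', hcG⟩
    · rcases le_or_gt m q with hq' | hq'
      · have : m ∈ H := (partner_cover hu (hF1 m hmF) hq').resolve_left hmA
        exact ⟨m, Finset.mem_inter.2 ⟨hmF, hHG this⟩⟩
      · have hAF : A ⊆ F := fun x hx =>
          hcF x hx (lt_of_le_of_lt ((partner_le_q hu).1 x hx).2 hq')
        exact ⟨q, Finset.mem_inter.2 ⟨hAF hqA, hHG hqH⟩⟩
    · rcases lt_trichotomy m m' with h | h | h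
      · exact core_aux hi hu (hF1 m hmF) hmF hmA hcF hmG' hcG h
      · exact ⟨m, Finset.mem_inter.2 ⟨hmF, h ▸ hmG'⟩⟩
      · have := core_aux (q := q) (A := H) (H := A)
          (by rw [Finset.inter_comm]; exact hi) (by rw [Finset.union_comm]; exact hu)
          (hG1 m' hmG') hmG' hmH' hcG hmF hcF h
        rw [Finset.inter_comm] at this
        exact this
end


lemma exists_disjoint_s8 {n q a b : ℕ} {A H G : Finset ℕ}
    (hi : A ∩ H = {q}) (hu : A ∪ H = Finset.Icc 1 q)
    (hA : A ⊆ Finset.Icc 1 n) (hAa : A.card = a)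
    (hG : G ⊆ Finset.Icc 1 n) (hGb : G.card = b)
    (hab : a + b ≤ n)
    (hnG : ¬ lexLE G H) :
    ∃ F, F ⊆ Finset.Icc 1 n ∧ F.card = a ∧ lexLE F A ∧ F ∩ G = ∅ := by
  obtain ⟨hqA, hqH⟩ := partner_mem_q hi
  have hHG : ¬ H ⊆ G := fun h => hnG (Or.inl h)
  have hne : (H \ G).Nonempty := by
    rw [Finset.sdiff_nonempty]; exact hHG
  set m := (H \ G).min' hne with hm
  have hmmem : m ∈ H \ G := Finset.min'_mem _ _
  have hmH : m ∈ H := (Finset.mem_sdiff.1 hmmem).1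
  have hmG : m ∉ G := (Finset.mem_sdiff.1 hmmem).2
  have h1m : 1 ≤ m := ((partner_le_q hu).2 m hmH).1
  have hmq : m ≤ q := ((partner_le_q hu).2 m hmH).2
  have Hlow : ∀ x ∈ H, x < m → x ∈ G := by
    intro x hx hxm
    by_contra hxG
    exact absurd (Finset.min'_le _ _ (Finset.mem_sdiff.2 ⟨hx, hxG⟩)) (not_le.2 (hm ▸ hxm))
  have Glow : ∀ x ∈ G, x < m → x ∈ H := by
    intro x hx hxm
    by_contra hxH
    exact hnG ((lexLE_iff_cert G H).2 (Or.inr ⟨x, hx, hxH,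
      fun y hy hyx => Hlow y hy (hyx.trans hxm)⟩))
  rcases eq_or_lt_of_le hmq with hmq' | hmq'
  · -- m = q : F = A works
    refine ⟨A, hA, hAa, Or.inl (Finset.Subset.refl A), ?_⟩
    rw [Finset.eq_empty_iff_forall_notMem]
    intro x hx
    rw [Finset.mem_inter] at hx
    have hxq : x ≤ q := ((partner_le_q hu).1 x hx.1).2
    rcases lt_or_eq_of_le hxq with h | h
    · have : x ∈ H := Glow x hx.2 (hmq' ▸ h)
      exact absurd (partner_inter hi hx.1 this) (ne_of_lt h)
    · exact hmG (hmq' ▸ h ▸ hx.2)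
  · -- m < q
    have hmA : m ∉ A := fun h => absurd (partner_inter hi h hmH) (ne_of_lt hmq')
    have hqn : q ≤ n := (Finset.mem_Icc.1 (hA hqA)).2
    set Am := A.filter (· < m) with hAm
    -- counting
    have f1 : G.filter (· < m) = H.filter (· < m) := by
      ext x
      simp only [Finset.mem_filter]
      exact ⟨fun ⟨h1, h2⟩ => ⟨Glow x h1 h2, h2⟩, fun ⟨h1, h2⟩ => ⟨Hlow x h1 h2, h2⟩⟩
    have f2 : Am ∪ H.filter (· < m) = Finset.Icc 1 (m - 1) := by
      ext x
      simp only [hAm, Finset.mem_union, Finset.mem_filter, Finset.mem_Icc]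
      constructor
      · rintro (⟨h1, h2⟩ | ⟨h1, h2⟩)
        · exact ⟨((partner_le_q hu).1 x h1).1, by omega⟩
        · exact ⟨((partner_le_q hu).2 x h1).1, by omega⟩
      · rintro ⟨h1, h2⟩
        have hxm : x < m := by omega
        rcases partner_cover hu h1 (by omega) with h | h
        · exact Or.inl ⟨h, hxm⟩
        · exact Or.inr ⟨h, hxm⟩
    have f2d : Disjoint Am (H.filter (· < m)) := by
      rw [Finset.disjoint_left]
      intro x hx hx'
      rw [hAm, Finset.mem_filter] at hx
      rw [Finset.mem_filter] at hx'
      have := partner_inter hi hx.1 hx'.1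
      omega
    have c2 : Am.card + (H.filter (· < m)).card + 1 = m := by
      have := Finset.card_union_of_disjoint f2d
      rw [f2, Nat.card_Icc] at this
      omega
    have f3 : (G.filter (· < m)).card + (G.filter (fun x => ¬ x < m)).card = b := by
      rw [Finset.card_filter_add_card_filter_not, hGb]
    have f5 : Finset.Icc (m+1) n ∩ G = G.filter (fun x => ¬ x < m) := by
      ext x
      simp only [Finset.mem_inter, Finset.mem_filter, Finset.mem_Icc, not_lt]
      constructor
      · rintro ⟨⟨h1, h2⟩, h3⟩; exact ⟨h3, by omega⟩
      · rintro ⟨h1, h2⟩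
        have hx : x ≤ n := (Finset.mem_Icc.1 (hG h1)).2
        have : x ≠ m := fun h => hmG (h ▸ h1)
        exact ⟨⟨by omega, hx⟩, h1⟩
    have c5 : (Finset.Icc (m+1) n \ G).card + (G.filter (fun x => ¬ x < m)).card + m = n := by
      have h := Finset.card_sdiff_add_card_inter (Finset.Icc (m+1) n) G
      rw [f5, Nat.card_Icc] at h
      have hmn : m ≤ n := hmq.trans hqn
      omega
    have cAmlt : Am.card < a := by
      have : Am ⊂ A := by
        rw [hAm]
        refine Finset.filter_ssubset.2 ⟨q, hqA, by omega⟩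
      have := Finset.card_lt_card this
      omega
    have hcard : a - 1 - Am.card ≤ (Finset.Icc (m+1) n \ G).card := by
      have hf1 := f1
      have : (G.filter (· < m)).card = (H.filter (· < m)).card := by rw [f1]
      omega
    obtain ⟨S, hS, hScard⟩ := Finset.exists_subset_card_eq hcard
    have hSm : ∀ x ∈ S, m < x := by
      intro x hx
      have := (Finset.mem_Icc.1 (Finset.mem_sdiff.1 (hS hx)).1).1
      omega
    have hSG : ∀ x ∈ S, x ∉ G := fun x hx => (Finset.mem_sdiff.1 (hS hx)).2
    refine ⟨insert m (Am ∪ S), ?_, ?_, ?_, ?_⟩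
    · intro x hx
      rcases Finset.mem_insert.1 hx with h | h
      · exact h ▸ Finset.mem_Icc.2 ⟨h1m, hmq.trans hqn⟩
      · rcases Finset.mem_union.1 h with h | h
        · exact hA (Finset.filter_subset _ _ h)
        · have := Finset.mem_Icc.1 (Finset.mem_sdiff.1 (hS h)).1
          exact Finset.mem_Icc.2 ⟨by omega, this.2⟩
    · have d1 : Disjoint Am S := by
        rw [Finset.disjoint_left]
        intro x hx hx'
        rw [hAm, Finset.mem_filter] at hx
        exact absurd (hSm x hx') (by omega)
      have hmnotin : m ∉ Am ∪ S := by
        rw [Finset.mem_union]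
        rintro (h | h)
        · exact hmA (Finset.filter_subset _ _ h)
        · exact absurd (hSm m h) (lt_irrefl m)
      rw [Finset.card_insert_of_notMem hmnotin, Finset.card_union_of_disjoint d1, hScard]
      omega
    · refine (lexLE_iff_cert _ _).2 (Or.inr ⟨m, Finset.mem_insert_self _ _, hmA, ?_⟩)
      intro x hx hxm
      refine Finset.mem_insert_of_mem (Finset.mem_union_left _ ?_)
      rw [hAm, Finset.mem_filter]
      exact ⟨hx, hxm⟩
    · rw [Finset.eq_empty_iff_forall_notMem]
      intro x hx
      rw [Finset.mem_inter] at hx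
      obtain ⟨hxF, hxG⟩ := hx
      rcases Finset.mem_insert.1 hxF with h | h
      · exact hmG (h ▸ hxG)
      · rcases Finset.mem_union.1 h with h | h
        · rw [hAm, Finset.mem_filter] at h
          have : x ∈ H := Glow x hxG h.2
          have := partner_inter hi h.1 this
          omega
        · exact hSG x h hxG


lemma lexLE_of_superset {A B : Finset ℕ} (h : B ⊆ A) : lexLE A B := Or.inl h

lemma lexLE_shrink {G B H : Finset ℕ} (hHB : H ⊆ B) (h : lexLE G B) : lexLE G H := by
  rw [lexLE_iff_cert] at h ⊢
  rcases h with h | ⟨m, hmG, hmB, hc⟩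
  · exact Or.inl (hHB.trans h)
  · exact Or.inr ⟨m, hmG, fun hx => hmB (hHB hx), fun x hx hxm => hc x (hHB hx) hxm⟩

-- b > H.card case, backward direction
lemma lexLE_extend {n q a b : ℕ} {A H G : Finset ℕ}
    (hi : A ∩ H = {q}) (hu : A ∪ H = Finset.Icc 1 q)
    (hq : q + 1 = a + H.card) (hab : a + b ≤ n) (hb : H.card < b)
    (hG : G ⊆ Finset.Icc 1 n) (hGb : G.card = b)
    (hGH : lexLE G H) :
    lexLE G (H ∪ Finset.Icc (n - b + H.card + 1) n) := by
  set s := n - b + H.card with hs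
  set T := Finset.Icc (s + 1) n with hT
  set B := H ∪ T with hB
  have hqs : q ≤ s := by omega
  have hHq : ∀ x ∈ H, 1 ≤ x ∧ x ≤ q := by
    intro x hx
    have : x ∈ Finset.Icc 1 q := hu ▸ Finset.mem_union_right A hx
    exact Finset.mem_Icc.1 this
  have hHsub : ∀ x ∈ H, x ≤ s := fun x hx => (hHq x hx).2.trans hqs
  have hdisj : Disjoint H T := by
    rw [Finset.disjoint_left]
    intro x hx hx'
    have := (Finset.mem_Icc.1 hx').1
    have := hHsub x hx
    omega
  have hBcard : B.card = b := by
    rw [hB, Finset.card_union_of_disjoint hdisj, hT, Nat.card_Icc]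
    omega
  have hnotT : ∀ x ∈ G, x ∉ T → x ≤ s := by
    intro x hx hx'
    have hxn := (Finset.mem_Icc.1 (hG hx)).2
    rw [hT, Finset.mem_Icc, not_and_or] at hx'
    omega
  rcases (lexLE_iff_cert G H).1 hGH with hHG | ⟨m, hmG, hmH, hc⟩
  · -- H ⊆ G
    by_cases hBG : B ⊆ G
    · exact Or.inl hBG
    · have hGB : ¬ G ⊆ B := by
        intro h
        exact hBG ((Finset.eq_of_subset_of_card_le h (by omega)) ▸ Finset.Subset.refl G)
      obtain ⟨x, hxG, hxB⟩ := Finset.not_subset.1 hGB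
      refine (lexLE_iff_cert _ _).2 (Or.inr ⟨x, hxG, hxB, ?_⟩)
      intro y hy hyx
      rcases Finset.mem_union.1 hy with h | h
      · exact hHG h
      · have hxs : x ≤ s := hnotT x hxG (fun h' => hxB (Finset.mem_union_right H h'))
        have := (Finset.mem_Icc.1 h).1
        omega
  · by_cases hmT : m ∈ T
    · -- then H ⊆ G
      have hHG : H ⊆ G := by
        intro x hx
        have := (Finset.mem_Icc.1 hmT).1
        exact hc x hx (by have := hHsub x hx; omega)
      by_cases hBG : B ⊆ G
      · exact Or.inl hBG
      · have hGB : ¬ G ⊆ B := by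
          intro h
          exact hBG ((Finset.eq_of_subset_of_card_le h (by omega)) ▸ Finset.Subset.refl G)
        obtain ⟨x, hxG, hxB⟩ := Finset.not_subset.1 hGB
        refine (lexLE_iff_cert _ _).2 (Or.inr ⟨x, hxG, hxB, ?_⟩)
        intro y hy hyx
        rcases Finset.mem_union.1 hy with h | h
        · exact hHG h
        · have hxs : x ≤ s := hnotT x hxG (fun h' => hxB (Finset.mem_union_right H h'))
          have := (Finset.mem_Icc.1 h).1
          omega
    · refine (lexLE_iff_cert _ _).2 (Or.inr ⟨m, hmG, ?_, ?_⟩)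
      · intro h
        rcases Finset.mem_union.1 h with h | h
        · exact hmH h
        · exact hmT h
      · intro x hx hxm
        rcases Finset.mem_union.1 hx with h | h
        · exact hc x h hxm
        · have hms : m ≤ s := hnotT m hmG hmT
          have := (Finset.mem_Icc.1 h).1
          omega


theorem stmt8 (a b n : ℕ) (ha : 1 ≤ a) (hb : 1 ≤ b) (hab : a + b ≤ n)
    (A B : Finset ℕ) (hA : A ⊆ Finset.Icc 1 n) (hAa : A.card = a)
    (hB : isKPartner n A b B) :
    crossInt (Lfam n A a) (Lfam n B b) ∧
    maximalTo n b (Lfam n B b) (Lfam n A a) := by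
  obtain ⟨H, ⟨q, hi, hu⟩, hcase⟩ := hB
  have hq : q + 1 = a + H.card := by
    have h1 := Finset.card_union_add_card_inter A H
    rw [hi, hu, Nat.card_Icc, Finset.card_singleton, hAa] at h1
    omega
  have memL : ∀ (R : Finset ℕ) (k : ℕ) (G : Finset ℕ),
      G ∈ Lfam n R k ↔ (G ⊆ Finset.Icc 1 n ∧ G.card = k ∧ lexLE G R) := by
    intro R k G
    simp only [Lfam, ksubsets, Finset.mem_filter, Finset.mem_powersetCard]
    tauto
  have fwd : ∀ G, lexLE G B → lexLE G H := by
    intro G hGB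
    rcases hcase with ⟨hbe, rfl⟩ | ⟨hlt, rfl⟩ | ⟨hlt, hKk, hKH, hmax⟩
    · exact hGB
    · exact lexLE_shrink Finset.subset_union_left hGB
    · exact lexLE_trans hGB hKH
  have bwd : ∀ G, G ⊆ Finset.Icc 1 n → G.card = b → lexLE G H → lexLE G B := by
    intro G hG hGb hGH
    rcases hcase with ⟨hbe, rfl⟩ | ⟨hlt, rfl⟩ | ⟨hlt, hKk, hKH, hmax⟩
    · exact hGH
    · exact lexLE_extend hi hu hq hab hlt hG hGb hGH
    · refine hmax G ?_ hGH
      rw [ksubsets, Finset.mem_powersetCard]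
      exact ⟨hG, hGb⟩
  constructor
  · intro F hF G hG
    rw [memL] at hF hG
    exact lexLE_cross hi hu (fun x hx => (Finset.mem_Icc.1 (hF.1 hx)).1)
      (fun x hx => (Finset.mem_Icc.1 (hG.1 hx)).1) hF.2.2 (fwd G hG.2.2)
  · intro A' hA' hsub hcross
    apply Finset.Subset.antisymm _ hsub
    intro G hG
    have hGk := hA' hG
    rw [ksubsets, Finset.mem_powersetCard] at hGk
    obtain ⟨hGsub, hGb⟩ := hGk
    rw [memL]
    refine ⟨hGsub, hGb, bwd G hGsub hGb ?_⟩
    by_contra hnGH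
    obtain ⟨F, hF1, hF2, hF3, hF4⟩ := exists_disjoint_s8 hi hu hA hAa hGsub hGb hab hnGH
    have hne : (G ∩ F).Nonempty := hcross G hG F ((memL A a F).2 ⟨hF1, hF2, hF3⟩)
    rw [Finset.inter_comm, hF4] at hne
    exact Finset.not_nonempty_empty hne
end

section
/- Let a, b, n be positive integers with n ≥ a + b. If ℒ([n], A, a) and ℒ([n], B, b) are cross intersecting with |A| = a, |B| = b, and {1, n−a+2, …, n} ≼ A, then B ≼ {1, n−b+2, …, n}. -/
open Finset

lemma lexLE_of {s t : Finset ℕ} {m : ℕ} (hm : m ∈ s \ t) (h : ∀ y ∈ t \ s, m < y) :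
    lexLE s t := by
  right
  have h1 : (s \ t).min ≤ (m : ℕ∞) := Finset.min_le hm
  have h2 : ((m + 1 : ℕ) : ℕ∞) ≤ (t \ s).min :=
    Finset.le_min fun y hy => WithTop.coe_le_coe.mpr (Nat.succ_le_of_lt (h y hy))
  have h3 : ((m : ℕ) : ℕ∞) < ((m + 1 : ℕ) : ℕ∞) := WithTop.coe_lt_coe.mpr (Nat.lt_succ_self m)
  exact lt_of_le_of_lt h1 (lt_of_lt_of_le h3 h2)

theorem stmt9 (a b n : ℕ) (ha : 1 ≤ a) (hb : 1 ≤ b) (hab : a + b ≤ n)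
    (A B : Finset ℕ) (hA : A ∈ ksubsets n a) (hB : B ∈ ksubsets n b)
    (hcross : crossInt (Lfam n A a) (Lfam n B b))
    (h1 : lexLE (insert 1 (Finset.Icc (n - a + 2) n)) A) :
    lexLE B (insert 1 (Finset.Icc (n - b + 2) n)) := by
  set L := insert 1 (Finset.Icc (n - a + 2) n) with hLdef
  set M := insert 1 (Finset.Icc (n - b + 2) n) with hMdef
  rw [ksubsets, Finset.mem_powersetCard] at hA hB
  obtain ⟨hAsub, hAcard⟩ := hA
  obtain ⟨hBsub, hBcard⟩ := hB
  have h1L : (1 : ℕ) ∉ Finset.Icc (n - a + 2) n := by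
    rw [Finset.mem_Icc]; omega
  have h1M : (1 : ℕ) ∉ Finset.Icc (n - b + 2) n := by
    rw [Finset.mem_Icc]; omega
  have hLcard : L.card = a := by
    rw [hLdef, Finset.card_insert_of_notMem h1L, Nat.card_Icc]; omega
  have hMcard : M.card = b := by
    rw [hMdef, Finset.card_insert_of_notMem h1M, Nat.card_Icc]; omega
  by_cases h1B : (1 : ℕ) ∈ B
  · -- B contains 1: directly show lexLE B M
    by_cases hBM : B ⊆ M
    · exact Or.inl (by rw [Finset.eq_of_subset_of_card_le hBM (by omega)])
    · obtain ⟨x, hxB, hxM⟩ := Finset.not_subset.mp hBM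
      refine lexLE_of (Finset.mem_sdiff.mpr ⟨hxB, hxM⟩) fun y hy => ?_
      rw [Finset.mem_sdiff, hMdef, Finset.mem_insert, Finset.mem_Icc] at hy
      have hy1 : y ≠ 1 := fun h => hy.2 (h ▸ h1B)
      have hx1 : x ≠ 1 := fun h => hxM (h ▸ Finset.mem_insert_self 1 _)
      have hxn := Finset.mem_Icc.mp (hBsub hxB)
      rw [hMdef, Finset.mem_insert, Finset.mem_Icc] at hxM
      omega
  · -- 1 ∉ B: derive a contradiction
    exfalso
    have hB2 : B ⊆ Finset.Icc 2 n := by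
      intro x hx
      have := Finset.mem_Icc.mp (hBsub hx)
      rw [Finset.mem_Icc]
      have : x ≠ 1 := fun h => h1B (h ▸ hx)
      omega
    have hScard : a - 1 ≤ ((Finset.Icc 2 n) \ B).card := by
      rw [Finset.card_sdiff_of_subset hB2, Nat.card_Icc]; omega
    obtain ⟨Y, hYsub, hYcard⟩ := Finset.exists_subset_card_eq hScard
    have h1Y : (1 : ℕ) ∉ Y := fun h => by
      have := Finset.mem_sdiff.mp (hYsub h)
      have := Finset.mem_Icc.mp this.1
      omega
    set X := insert 1 Y with hXdef
    have h1X : (1 : ℕ) ∈ X := Finset.mem_insert_self 1 Y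
    have hXcard : X.card = a := by
      rw [hXdef, Finset.card_insert_of_notMem h1Y, hYcard]; omega
    have hXsub : X ⊆ Finset.Icc 1 n := by
      intro x hx
      rw [hXdef, Finset.mem_insert] at hx
      rcases hx with rfl | hx
      · rw [Finset.mem_Icc]; omega
      · have := Finset.mem_Icc.mp (Finset.mem_sdiff.mp (hYsub hx)).1
        rw [Finset.mem_Icc]; omega
    -- X is disjoint from B
    have hXB : X ∩ B = ∅ := by
      rw [Finset.eq_empty_iff_forall_notMem]
      intro x hx
      rw [Finset.mem_inter, hXdef, Finset.mem_insert] at hx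
      rcases hx with ⟨rfl | hxY, hxB⟩
      · exact h1B hxB
      · exact (Finset.mem_sdiff.mp (hYsub hxY)).2 hxB
    -- key: lexLE X A
    have hXA : lexLE X A := by
      by_cases h1A : (1 : ℕ) ∈ A
      · -- then A = L
        have hAL : A ⊆ L := by
          intro x hx
          by_contra hxL
          rcases h1 with hsub | hlt
          · exact hxL (hsub hx)
          · have hmin : (A \ L).min ≤ (x : ℕ∞) :=
              Finset.min_le (Finset.mem_sdiff.mpr ⟨hx, hxL⟩)
            have hne : (L \ A).Nonempty := by
              rw [Finset.nonempty_iff_ne_empty]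
              intro h
              rw [h, Finset.min_empty] at hlt
              exact not_top_lt hlt
            obtain ⟨m, hmmin⟩ := Finset.min_of_nonempty hne
            have hmmem := Finset.mem_of_min hmmin
            rw [hmmin] at hlt
            have hmx : (m : ℕ∞) < (x : ℕ∞) := lt_of_lt_of_le hlt hmin
            have hmx' : m < x := WithTop.coe_lt_coe.mp hmx
            rw [Finset.mem_sdiff] at hmmem
            have hm1 : m ≠ 1 := fun h => hmmem.2 (h ▸ h1A)
            rw [hLdef, Finset.mem_insert, Finset.mem_Icc] at hmmem
            have hx1 : x ≠ 1 := fun h => hxL (h ▸ Finset.mem_insert_self 1 _)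
            have hxn := Finset.mem_Icc.mp (hAsub hx)
            rw [hLdef, Finset.mem_insert, Finset.mem_Icc] at hxL
            omega
        have hAeqL : A = L := Finset.eq_of_subset_of_card_le hAL (by omega)
        rw [hAeqL]
        by_cases hXL : X ⊆ L
        · exact Or.inl (by rw [Finset.eq_of_subset_of_card_le hXL (by omega)])
        · obtain ⟨x, hxX, hxL⟩ := Finset.not_subset.mp hXL
          refine lexLE_of (Finset.mem_sdiff.mpr ⟨hxX, hxL⟩) fun y hy => ?_
          rw [Finset.mem_sdiff, hLdef, Finset.mem_insert, Finset.mem_Icc] at hy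
          have hy1 : y ≠ 1 := fun h => hy.2 (h ▸ h1X)
          have hx1 : x ≠ 1 := fun h => hxL (h ▸ Finset.mem_insert_self 1 _)
          have hxn := Finset.mem_Icc.mp (hXsub hxX)
          rw [hLdef, Finset.mem_insert, Finset.mem_Icc] at hxL
          omega
      · refine lexLE_of (Finset.mem_sdiff.mpr ⟨h1X, h1A⟩) fun y hy => ?_
        rw [Finset.mem_sdiff] at hy
        have := Finset.mem_Icc.mp (hAsub hy.1)
        have : y ≠ 1 := fun h => h1A (h ▸ hy.1)
        omega
    have hXmem : X ∈ Lfam n A a := by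
      rw [Lfam, Finset.mem_filter, ksubsets, Finset.mem_powersetCard]
      exact ⟨⟨hXsub, hXcard⟩, hXA⟩
    have hBmem : B ∈ Lfam n B b := by
      rw [Lfam, Finset.mem_filter, ksubsets, Finset.mem_powersetCard]
      exact ⟨⟨hBsub, hBcard⟩, Or.inl (Finset.Subset.refl B)⟩
    have := hcross X hXmem B hBmem
    rw [hXB] at this
    exact Finset.not_nonempty_empty this
end

section
/- Let F ⊆ [n] with |F| = f and k ≤ n − f. Let F^t = [n−ℓ(F)+1, n] be the maximal tail interval of F ending at n (ℓ(F) = 0 and F^t = ∅ if n ∉ F). If K is the k-partner of F and K' is the k-partner of F \ F^t, then K = K'. -/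
open Finset

lemma st10_coe_lt_min {a : ℕ} {s : Finset ℕ} (h : ∀ b ∈ s, a < b) :
    (a : WithTop ℕ) < s.min := by
  rcases s.eq_empty_or_nonempty with rfl | hs
  · simp
  · obtain ⟨b, hb⟩ := Finset.min_of_nonempty hs
    rw [hb]
    exact WithTop.coe_lt_coe.mpr (h b (Finset.mem_of_min hb))

lemma st10_min_lt_extract {s t : Finset ℕ} (h : s.min < t.min) :
    ∃ m ∈ s, ∀ b ∈ t, m < b := by
  have hne : s.Nonempty := by
    rw [Finset.nonempty_iff_ne_empty]
    rintro rfl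
    rw [Finset.min_empty] at h
    exact not_top_lt h
  obtain ⟨m, hm⟩ := Finset.min_of_nonempty hne
  refine ⟨m, Finset.mem_of_min hm, fun b hb => ?_⟩
  have := h.trans_le (Finset.min_le hb)
  rw [hm] at this
  exact WithTop.coe_lt_coe.mp this

lemma st10_lex_witness {A B : Finset ℕ} {a : ℕ} (h1 : a ∈ A) (h2 : a ∉ B)
    (h3 : ∀ b ∈ B, b ∉ A → a < b) : lexLE A B := by
  refine Or.inr (lt_of_le_of_lt (Finset.min_le (Finset.mem_sdiff.mpr ⟨h1, h2⟩)) ?_)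
  exact st10_coe_lt_min fun b hb => h3 b (Finset.mem_sdiff.mp hb).1 (Finset.mem_sdiff.mp hb).2

lemma st10_lex_antisymm {A B : Finset ℕ} (hc : A.card = B.card)
    (h1 : lexLE A B) (h2 : lexLE B A) : A = B := by
  rcases h1 with h1 | h1
  · exact (Finset.eq_of_subset_of_card_le h1 hc.le).symm
  rcases h2 with h2 | h2
  · exact Finset.eq_of_subset_of_card_le h2 hc.ge
  · exact absurd h2 (lt_asymm h1)

lemma st10_partner_mem {F H : Finset ℕ} {q : ℕ} (hint : F ∩ H = {q})
    (hun : F ∪ H = Finset.Icc 1 q) :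
    ∀ x, x ∈ H ↔ ((1 ≤ x ∧ x ≤ q ∧ x ∉ F) ∨ x = q) := by
  have hqH : q ∈ H := by
    have : q ∈ F ∩ H := by rw [hint]; exact Finset.mem_singleton_self q
    exact (Finset.mem_inter.mp this).2
  intro x
  constructor
  · intro hx
    by_cases hxF : x ∈ F
    · right
      have : x ∈ F ∩ H := Finset.mem_inter.mpr ⟨hxF, hx⟩
      rw [hint] at this
      exact Finset.mem_singleton.mp this
    · left
      have : x ∈ Finset.Icc 1 q := hun ▸ Finset.mem_union_right F hx
      exact ⟨(Finset.mem_Icc.mp this).1, (Finset.mem_Icc.mp this).2, hxF⟩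
  · rintro (⟨hx1, hx2, hx3⟩ | rfl)
    · have : x ∈ F ∪ H := hun ▸ Finset.mem_Icc.mpr ⟨hx1, hx2⟩
      exact (Finset.mem_union.mp this).resolve_left hx3
    · exact hqH

lemma st10_partner_unique {F H1 H2 : Finset ℕ} (h1 : isPartner F H1)
    (h2 : isPartner F H2) : H1 = H2 := by
  obtain ⟨q1, hi1, hu1⟩ := h1
  obtain ⟨q2, hi2, hu2⟩ := h2
  have hq1F : q1 ∈ F := by
    have : q1 ∈ F ∩ H1 := by rw [hi1]; exact Finset.mem_singleton_self q1
    exact (Finset.mem_inter.mp this).1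
  have hq2F : q2 ∈ F := by
    have : q2 ∈ F ∩ H2 := by rw [hi2]; exact Finset.mem_singleton_self q2
    exact (Finset.mem_inter.mp this).1
  have hs1 : F ⊆ Finset.Icc 1 q1 := hu1 ▸ Finset.subset_union_left
  have hs2 : F ⊆ Finset.Icc 1 q2 := hu2 ▸ Finset.subset_union_left
  have hq : q1 = q2 :=
    le_antisymm (Finset.mem_Icc.mp (hs2 hq1F)).2 (Finset.mem_Icc.mp (hs1 hq2F)).2
  subst hq
  ext x
  rw [st10_partner_mem hi1 hu1 x, st10_partner_mem hi2 hu2 x]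

lemma st10_kpartner_uniq {n k : ℕ} {F K1 K2 : Finset ℕ}
    (h1 : isKPartner n F k K1) (h2 : isKPartner n F k K2) : K1 = K2 := by
  obtain ⟨H1, hp1, hc1⟩ := h1
  obtain ⟨H2, hp2, hc2⟩ := h2
  have hH : H1 = H2 := st10_partner_unique hp1 hp2
  subst hH
  rcases hc1 with ⟨ha, rfl⟩ | ⟨ha, rfl⟩ | ⟨ha, hm1, hl1, hx1⟩ <;>
    rcases hc2 with ⟨hb, rfl⟩ | ⟨hb, rfl⟩ | ⟨hb, hm2, hl2, hx2⟩
  · rfl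
  · omega
  · omega
  · omega
  · rfl
  · omega
  · omega
  · omega
  · have hc1 : K1.card = k := (Finset.mem_powersetCard.mp hm1).2
    have hc2 : K2.card = k := (Finset.mem_powersetCard.mp hm2).2
    exact st10_lex_antisymm (by rw [hc1, hc2]) (hx2 K1 hm1 hl1) (hx1 K2 hm2 hl2)

set_option maxHeartbeats 1000000 in
theorem stmt10 (n f k : ℕ) (F : Finset ℕ) (hF : F ⊆ Finset.Icc 1 n)
    (hf : F.card = f) (hk : k ≤ n - f) (K K' : Finset ℕ)
    (h1 : isKPartner n F k K) (h2 : isKPartner n (F \ tailSet n F) k K') :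
    K = K' := by
  classical
  obtain ⟨H, ⟨q₁, hint1, hun1⟩, hc1⟩ := h1
  have hq₁F : q₁ ∈ F := by
    have : q₁ ∈ F ∩ H := by rw [hint1]; exact Finset.mem_singleton_self q₁
    exact (Finset.mem_inter.mp this).1
  have hFq₁ : F ⊆ Finset.Icc 1 q₁ := hun1 ▸ Finset.subset_union_left
  have hn1 : 1 ≤ n := le_trans (Finset.mem_Icc.mp (hF hq₁F)).1 (Finset.mem_Icc.mp (hF hq₁F)).2
  have hfn : f ≤ n := by
    have := Finset.card_le_card hF
    rw [hf, Nat.card_Icc] at this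
    omega
  by_cases hnF : n ∈ F
  swap
  · -- n ∉ F : tail is empty, F \ tailSet n F = F
    have hℓ0 : tailLen n F = 0 := by
      unfold tailLen
      refine Nat.le_antisymm (Finset.sup_le fun x hx => ?_) (Nat.zero_le _)
      simp only [Finset.mem_filter, Finset.mem_range] at hx
      by_contra hx0
      have hx1 : 1 ≤ x := by simp only [id_eq] at hx0; omega
      exact hnF (hx.2 (Finset.mem_Icc.mpr ⟨by omega, le_refl n⟩))
    have htriv : F \ tailSet n F = F := by
      unfold tailSet
      rw [hℓ0, Finset.Icc_eq_empty (by omega), Finset.sdiff_empty]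
    rw [htriv] at h2
    exact st10_kpartner_uniq ⟨H, ⟨q₁, hint1, hun1⟩, hc1⟩ h2
  -- main case : n ∈ F
  have hq₁n : q₁ = n :=
    le_antisymm (Finset.mem_Icc.mp (hF hq₁F)).2 (Finset.mem_Icc.mp (hFq₁ hnF)).2
  rw [hq₁n] at hint1 hun1 hq₁F hFq₁
  set ℓ := tailLen n F with hℓdef
  have hfilt_ne : ((Finset.range (n + 1)).filter
      (fun x => Finset.Icc (n - x + 1) n ⊆ F)).Nonempty := by
    refine ⟨0, Finset.mem_filter.mpr ⟨Finset.mem_range.mpr (by omega), ?_⟩⟩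
    intro x hx
    have := Finset.mem_Icc.mp hx
    omega
  have htail : Finset.Icc (n - ℓ + 1) n ⊆ F := by
    obtain ⟨b, hb, he⟩ := Finset.exists_mem_eq_sup _ hfilt_ne id
    have hlb : ℓ = b := he
    rw [hlb]
    exact (Finset.mem_filter.mp hb).2
  have hℓn : ℓ ≤ n := by
    refine Finset.sup_le fun x hx => ?_
    have := Finset.mem_range.mp (Finset.mem_filter.mp hx).1
    simp only [id_eq]
    omega
  have hℓ1 : 1 ≤ ℓ := by
    refine Finset.le_sup (f := id) (Finset.mem_filter.mpr ⟨Finset.mem_range.mpr (by omega), ?_⟩)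
    intro x hx
    have := Finset.mem_Icc.mp hx
    have : x = n := by omega
    rwa [this]
  have hcard_tail : (Finset.Icc (n - ℓ + 1) n).card = ℓ := by
    rw [Nat.card_Icc]; omega
  have hℓf : ℓ ≤ f := by
    rw [← hf, ← hcard_tail]
    exact Finset.card_le_card htail
  have hF'card : (F \ Finset.Icc (n - ℓ + 1) n).card + ℓ = f := by
    have h := Finset.card_sdiff_add_card_eq_card htail
    rw [hcard_tail, hf] at h
    exact h
  have htails : tailSet n F = Finset.Icc (n - ℓ + 1) n := rfl
  rw [htails] at h2
  set F' := F \ Finset.Icc (n - ℓ + 1) n with hF'def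
  obtain ⟨H₂, ⟨q₂, hint2, hun2⟩, hc2⟩ := h2
  have hq₂F' : q₂ ∈ F' := by
    have : q₂ ∈ F' ∩ H₂ := by rw [hint2]; exact Finset.mem_singleton_self q₂
    exact (Finset.mem_inter.mp this).1
  have hF'q₂ : F' ⊆ Finset.Icc 1 q₂ := hun2 ▸ Finset.subset_union_left
  have hq₂F : q₂ ∈ F := (Finset.mem_sdiff.mp hq₂F').1
  have hq₂n : q₂ ≤ n := (Finset.mem_Icc.mp (hF hq₂F)).2
  have hq₂nl : q₂ ≤ n - ℓ := by
    have := (Finset.mem_sdiff.mp hq₂F').2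
    rw [Finset.mem_Icc] at this
    omega
  have hℓltn : ℓ < n := by
    rcases Nat.lt_or_ge ℓ n with h | h
    · exact h
    · exfalso
      have hle : ℓ = n := le_antisymm hℓn h
      have : F' = ∅ := by
        rw [hF'def, Finset.sdiff_eq_empty_iff_subset]
        intro x hx
        have := Finset.mem_Icc.mp (hF hx)
        rw [Finset.mem_Icc]
        omega
      rw [this] at hq₂F'
      exact absurd hq₂F' (Finset.notMem_empty q₂)
  have hnlF : n - ℓ ∉ F := by
    intro hmem
    have hsup : ℓ + 1 ≤ ℓ := by
      refine Finset.le_sup (f := id)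
        (Finset.mem_filter.mpr ⟨Finset.mem_range.mpr (by omega), ?_⟩)
      intro x hx
      have hxi := Finset.mem_Icc.mp hx
      by_cases hxe : x = n - ℓ
      · rwa [hxe]
      · exact htail (Finset.mem_Icc.mpr ⟨by omega, hxi.2⟩)
    omega
  have hq₂lt : q₂ + ℓ + 1 ≤ n := by
    have : q₂ ≠ n - ℓ := fun h => hnlF (h ▸ hq₂F)
    omega
  -- membership characterizations
  have hHmem : ∀ x, x ∈ H ↔ ((1 ≤ x ∧ x ≤ n ∧ x ∉ F) ∨ x = n) := st10_partner_mem hint1 hun1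
  have hH₂mem' := st10_partner_mem hint2 hun2
  have hF'F : ∀ x, x ≤ q₂ → (x ∈ F' ↔ x ∈ F) := by
    intro x hx
    rw [hF'def, Finset.mem_sdiff, Finset.mem_Icc]
    constructor
    · exact fun h => h.1
    · exact fun h => ⟨h, by omega⟩
  have hH₂mem : ∀ x, x ∈ H₂ ↔ ((1 ≤ x ∧ x ≤ q₂ ∧ x ∉ F) ∨ x = q₂) := by
    intro x
    rw [hH₂mem' x]
    constructor
    · rintro (⟨h1, h2, h3⟩ | h4)
      · exact Or.inl ⟨h1, h2, fun hx => h3 ((hF'F x h2).mpr hx)⟩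
      · exact Or.inr h4
    · rintro (⟨h1, h2, h3⟩ | h4)
      · exact Or.inl ⟨h1, h2, fun hx => h3 ((hF'F x h2).mp hx)⟩
      · exact Or.inr h4
  have hH₂sub : H₂ ⊆ Finset.Icc 1 n := by
    intro x hx
    rcases (hH₂mem x).mp hx with ⟨h1, h2, _⟩ | rfl
    · exact Finset.mem_Icc.mpr ⟨h1, by omega⟩
    · exact hF hq₂F
  have hgap : ∀ x ∈ F, x ≤ q₂ ∨ n - ℓ + 1 ≤ x := by
    intro x hx
    by_cases hxt : x ∈ Finset.Icc (n - ℓ + 1) n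
    · exact Or.inr (Finset.mem_Icc.mp hxt).1
    · exact Or.inl (Finset.mem_Icc.mp (hF'q₂ (Finset.mem_sdiff.mpr ⟨hx, hxt⟩))).2
  -- cardinality of H
  have hHcard : H.card = n - f + 1 := by
    have hHeq : H = insert n (Finset.Icc 1 n \ F) := by
      ext x
      rw [hHmem x, Finset.mem_insert, Finset.mem_sdiff, Finset.mem_Icc]
      constructor
      · rintro (⟨h1, h2, h3⟩ | rfl)
        · exact Or.inr ⟨⟨h1, h2⟩, h3⟩
        · exact Or.inl rfl
      · rintro (rfl | ⟨⟨h1, h2⟩, h3⟩)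
        · exact Or.inr rfl
        · exact Or.inl ⟨h1, h2, h3⟩
    rw [hHeq, Finset.card_insert_of_notMem (by simp [hnF]),
      Finset.card_sdiff_of_subset hF, Nat.card_Icc, hf]
    omega
  have hH₂card : F'.card + H₂.card = q₂ + 1 := by
    have := Finset.card_union_add_card_inter F' H₂
    rw [hint2, hun2, Nat.card_Icc, Finset.card_singleton] at this
    omega
  -- extract third branch from hc1
  have hkH : k < H.card := by omega
  rcases hc1 with ⟨ha, _⟩ | ⟨ha, _⟩ | ⟨_, hKmem, hKH, hKmax⟩
  · omega
  · omega
  have hKsub : K ⊆ Finset.Icc 1 n := (Finset.mem_powersetCard.mp hKmem).1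
  have hKcard : K.card = k := (Finset.mem_powersetCard.mp hKmem).2
  -- MAIN CLAIM
  have main : ∀ X : Finset ℕ, X ⊆ Finset.Icc 1 n → X.card = k →
      (lexLE X H ↔ lexLE X H₂) := by
    intro X hXsub hXcard
    constructor
    · rintro (hsub | hlt)
      · exfalso
        have := Finset.card_le_card hsub
        omega
      · obtain ⟨m, hmXH, hmlt⟩ := st10_min_lt_extract hlt
        have hmX : m ∈ X := (Finset.mem_sdiff.mp hmXH).1
        have hmH : m ∉ H := (Finset.mem_sdiff.mp hmXH).2
        have hm1n := Finset.mem_Icc.mp (hXsub hmX)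
        have hmF : m ∈ F ∧ m ≠ n := by
          rw [hHmem m] at hmH
          push_neg at hmH
          exact ⟨hmH.1 hm1n.1 hm1n.2, hmH.2⟩
        have hstar : ∀ x, x ∈ H → x ≤ m → x ∈ X := by
          intro x hx hxm
          by_contra hxX
          have := hmlt x (Finset.mem_sdiff.mpr ⟨hx, hxX⟩)
          omega
        rcases Nat.lt_trichotomy m q₂ with hmq | hmq | hmq
        · refine st10_lex_witness hmX ?_ ?_
          · rw [hH₂mem m]
            push_neg
            exact ⟨fun _ _ => hmF.1, by omega⟩
          · intro b hbH₂ hbX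
            by_contra hble
            push_neg at hble
            rcases (hH₂mem b).mp hbH₂ with ⟨hb1, hb2, hb3⟩ | rfl
            · have hbH : b ∈ H := (hHmem b).mpr (Or.inl ⟨hb1, by omega, hb3⟩)
              exact hbX (hstar b hbH hble)
            · omega
        · left
          intro x hx
          rcases (hH₂mem x).mp hx with ⟨hx1, hx2, hx3⟩ | rfl
          · have hxq : x ≠ q₂ := fun h => hx3 (h ▸ hq₂F)
            exact hstar x ((hHmem x).mpr (Or.inl ⟨hx1, by omega, hx3⟩)) (by omega)
          · exact hmq ▸ hmX
        · exfalso
          have hmtail : n - ℓ + 1 ≤ m := by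
            rcases hgap m hmF.1 with h | h
            · omega
            · exact h
          have hsub2 : insert m (Finset.Icc 1 (n - ℓ) \ F) ⊆ X := by
            intro x hx
            rcases Finset.mem_insert.mp hx with rfl | hx2
            · exact hmX
            · have hxi := Finset.mem_sdiff.mp hx2
              have hxb := Finset.mem_Icc.mp hxi.1
              refine hstar x ((hHmem x).mpr (Or.inl ⟨hxb.1, by omega, hxi.2⟩)) (by omega)
          have hIF' : Finset.Icc 1 (n - ℓ) \ F = Finset.Icc 1 (n - ℓ) \ F' := by
            ext x
            simp only [Finset.mem_sdiff, Finset.mem_Icc, hF'def]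
            constructor
            · rintro ⟨h1, h2⟩
              exact ⟨h1, fun h => h2 h.1⟩
            · rintro ⟨h1, h2⟩
              refine ⟨h1, fun hxF => h2 ⟨hxF, ?_⟩⟩
              omega
          have hF'sub : F' ⊆ Finset.Icc 1 (n - ℓ) := by
            intro x hx
            have h1 := Finset.mem_Icc.mp (hF'q₂ hx)
            rw [Finset.mem_Icc]
            omega
          have hcc : (Finset.Icc 1 (n - ℓ) \ F).card = n - f := by
            rw [hIF', Finset.card_sdiff_of_subset hF'sub, Nat.card_Icc]
            omega
          have hmnot : m ∉ Finset.Icc 1 (n - ℓ) \ F := by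
            rw [Finset.mem_sdiff, Finset.mem_Icc]
            push_neg
            intro h
            omega
          have := Finset.card_le_card hsub2
          rw [Finset.card_insert_of_notMem hmnot, hcc, hXcard] at this
          omega
    · intro hXH₂
      by_cases hss : H₂ ⊆ X
      · have hq₂X : q₂ ∈ X := hss ((hH₂mem q₂).mpr (Or.inr rfl))
        have hq₂H : q₂ ∉ H := by
          rw [hHmem q₂]
          push_neg
          exact ⟨fun _ _ => hq₂F, by omega⟩
        refine st10_lex_witness hq₂X hq₂H ?_
        intro b hbH hbX
        by_contra hble
        push_neg at hble
        rcases (hHmem b).mp hbH with ⟨hb1, hb2, hb3⟩ | rfl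
        · rcases Nat.eq_or_lt_of_le hble with heq | hlt
          · exact hb3 (heq ▸ hq₂F)
          · exact hbX (hss ((hH₂mem b).mpr (Or.inl ⟨hb1, by omega, hb3⟩)))
        · omega
      · rcases hXH₂ with hsub | hlt
        · exact absurd hsub hss
        obtain ⟨m, hmXH₂, hmlt⟩ := st10_min_lt_extract hlt
        have hmX : m ∈ X := (Finset.mem_sdiff.mp hmXH₂).1
        have hmH₂ : m ∉ H₂ := (Finset.mem_sdiff.mp hmXH₂).2
        obtain ⟨p, hpH₂, hpX⟩ := Finset.not_subset.mp hss
        have hmp : m < p := hmlt p (Finset.mem_sdiff.mpr ⟨hpH₂, hpX⟩)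
        have hpq₂ : p ≤ q₂ := by
          rcases (hH₂mem p).mp hpH₂ with ⟨_, h2, _⟩ | rfl
          · exact h2
          · exact le_refl _
        have hm1n := Finset.mem_Icc.mp (hXsub hmX)
        have hmF : m ∈ F := by
          rw [hH₂mem m] at hmH₂
          push_neg at hmH₂
          exact hmH₂.1 hm1n.1 (by omega)
        have hmH : m ∉ H := by
          rw [hHmem m]
          push_neg
          exact ⟨fun _ _ => hmF, by omega⟩
        refine st10_lex_witness hmX hmH ?_
        intro b hbH hbX
        by_contra hble
        push_neg at hble
        rcases (hHmem b).mp hbH with ⟨hb1, hb2, hb3⟩ | rfl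
        · have hbH₂ : b ∈ H₂ := (hH₂mem b).mpr (Or.inl ⟨hb1, by omega, hb3⟩)
          have := hmlt b (Finset.mem_sdiff.mpr ⟨hbH₂, hbX⟩)
          omega
        · omega
  -- now handle the three branches of hc2
  have hfinish : ∀ C : Finset ℕ, C ∈ ksubsets n k → lexLE C H₂ →
      (∀ X ∈ ksubsets n k, lexLE X H₂ → lexLE X C) → K = C := by
    intro C hCmem hCH₂ hCmax
    have hCsub : C ⊆ Finset.Icc 1 n := (Finset.mem_powersetCard.mp hCmem).1
    have hCcard : C.card = k := (Finset.mem_powersetCard.mp hCmem).2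
    have hKH₂ : lexLE K H₂ := (main K hKsub hKcard).mp hKH
    have hKC : lexLE K C := hCmax K hKmem hKH₂
    have hCH : lexLE C H := (main C hCsub hCcard).mpr hCH₂
    have hCK : lexLE C K := hKmax C hCmem hCH
    exact st10_lex_antisymm (by rw [hKcard, hCcard]) hKC hCK
  rcases hc2 with ⟨hkk, hKe⟩ | ⟨hlt2, hKe⟩ | ⟨hlt2, hK'mem, hK'H₂, hK'max⟩
  · rw [hKe]
    exact hfinish H₂ (Finset.mem_powersetCard.mpr ⟨hH₂sub, hkk.symm⟩) (Or.inl Finset.Subset.rfl)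
      fun X _ h => h
  · -- H₂.card < k
    rw [hKe]
    set t := n - k + H₂.card + 1 with htdef
    have hq₂t : q₂ < t := by omega
    have hdisj : Disjoint H₂ (Finset.Icc t n) := by
      rw [Finset.disjoint_left]
      intro x hx hxt
      have h1 : x ≤ q₂ := by
        rcases (hH₂mem x).mp hx with ⟨_, h2, _⟩ | rfl
        · exact h2
        · exact le_refl _
      have h2 := (Finset.mem_Icc.mp hxt).1
      omega
    have hK'card : (H₂ ∪ Finset.Icc t n).card = k := by
      rw [Finset.card_union_of_disjoint hdisj, Nat.card_Icc]
      omega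
    have hK'sub : H₂ ∪ Finset.Icc t n ⊆ Finset.Icc 1 n := by
      intro x hx
      rcases Finset.mem_union.mp hx with h | h
      · exact hH₂sub h
      · have := Finset.mem_Icc.mp h
        rw [Finset.mem_Icc]
        omega
    refine hfinish _ (Finset.mem_powersetCard.mpr ⟨hK'sub, hK'card⟩)
      (Or.inl Finset.subset_union_left) ?_
    intro X hXmem hXH₂
    have hXsub : X ⊆ Finset.Icc 1 n := (Finset.mem_powersetCard.mp hXmem).1
    have hXcard : X.card = k := (Finset.mem_powersetCard.mp hXmem).2
    by_cases hXeq : X = H₂ ∪ Finset.Icc t n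
    · exact hXeq ▸ Or.inl Finset.Subset.rfl
    have hnsub : ¬ X ⊆ H₂ ∪ Finset.Icc t n := by
      intro h
      exact hXeq (Finset.eq_of_subset_of_card_le h (by omega))
    obtain ⟨a, haX, haK'⟩ := Finset.not_subset.mp hnsub
    by_cases hss : H₂ ⊆ X
    · refine st10_lex_witness haX haK' ?_
      intro b hbK' hbX
      have hbt : b ∈ Finset.Icc t n := by
        rcases Finset.mem_union.mp hbK' with h | h
        · exact absurd (hss h) hbX
        · exact h
      have han := Finset.mem_Icc.mp (hXsub haX)
      have hat : a ∉ Finset.Icc t n := fun h => haK' (Finset.mem_union_right _ h)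
      rw [Finset.mem_Icc] at hat
      push_neg at hat
      have := (Finset.mem_Icc.mp hbt).1
      have haq : a < t := by
        rcases Nat.lt_or_ge a t with h | h
        · exact h
        · exact absurd (hat h) (by omega)
      omega
    · rcases hXH₂ with hsub | hlt
      · exact absurd hsub hss
      obtain ⟨m, hmXH₂, hmlt⟩ := st10_min_lt_extract hlt
      have hmX : m ∈ X := (Finset.mem_sdiff.mp hmXH₂).1
      have hmH₂ : m ∉ H₂ := (Finset.mem_sdiff.mp hmXH₂).2
      obtain ⟨p, hpH₂, hpX⟩ := Finset.not_subset.mp hss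
      have hmp : m < p := hmlt p (Finset.mem_sdiff.mpr ⟨hpH₂, hpX⟩)
      have hpq₂ : p ≤ q₂ := by
        rcases (hH₂mem p).mp hpH₂ with ⟨_, h2, _⟩ | rfl
        · exact h2
        · exact le_refl _
      have hmK' : m ∉ H₂ ∪ Finset.Icc t n := by
        rw [Finset.mem_union, Finset.mem_Icc]
        push_neg
        exact ⟨hmH₂, fun h => by omega⟩
      refine st10_lex_witness hmX hmK' ?_
      intro b hbK' hbX
      rcases Finset.mem_union.mp hbK' with h | h
      · exact hmlt b (Finset.mem_sdiff.mpr ⟨h, hbX⟩)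
      · have := (Finset.mem_Icc.mp h).1
        omega
  · exact hfinish K' hK'mem hK'H₂ hK'max
end
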